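/- arXiv:math/0303356 — 10 statements merged into one kernel-verified Lean document; each statement's English description precedes it below -/
import Mathlib

section
/- Let M : Fin n × Fin n → ℕ be a matrix such that every row sum and every column sum of M equals k, where k > 0. Then there exists a permutation σ of Fin n such that M(i, σ(i)) > 0 for all i; equivalently, the support of M contains the support of a permutation matrix. -/
theorem stmt_2 (n k : ℕ) (hk : 0 < k) (M : Fin n × Fin n → ℕ)
    (hrow : ∀ i : Fin n, ∑ j : Fin n, M (i, j) = k)
    (hcol : ∀ j : Fin n, ∑ i : Fin n, M (i, j) = k) :
    ∃ σ : Equiv.Perm (Fin n), ∀ i : Fin n, 0 < M (i, σ i) := by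
  classical
  set t : Fin n → Finset (Fin n) := fun i => Finset.univ.filter (fun j => 0 < M (i, j)) with ht
  have hall : ∀ s : Finset (Fin n), s.card ≤ (s.biUnion t).card := by
    intro s
    have key : k * s.card ≤ k * (s.biUnion t).card := by
      calc k * s.card = ∑ i ∈ s, ∑ j : Fin n, M (i, j) := by
            rw [Finset.sum_congr rfl (fun i _ => hrow i), Finset.sum_const, smul_eq_mul,
              mul_comm]
        _ = ∑ i ∈ s, ∑ j ∈ s.biUnion t, M (i, j) := by
            refine Finset.sum_congr rfl (fun i hi => ?_)
            refine (Finset.sum_subset (Finset.subset_univ _) ?_).symm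
            intro j _ hj
            by_contra hpos
            exact hj (Finset.mem_biUnion.mpr ⟨i, hi, by
              simp [ht, Nat.pos_of_ne_zero hpos]⟩)
        _ = ∑ j ∈ s.biUnion t, ∑ i ∈ s, M (i, j) := Finset.sum_comm
        _ ≤ ∑ j ∈ s.biUnion t, k := by
            refine Finset.sum_le_sum (fun j _ => ?_)
            rw [← hcol j]
            exact Finset.sum_le_sum_of_subset (Finset.subset_univ _)
        _ = k * (s.biUnion t).card := by rw [Finset.sum_const, smul_eq_mul, mul_comm]
    exact Nat.le_of_mul_le_mul_left key hk
  obtain ⟨f, hfinj, hf⟩ := (Finset.all_card_le_biUnion_card_iff_exists_injective t).mp hall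
  refine ⟨Equiv.ofBijective f ((Finite.injective_iff_bijective).mp hfinj), fun i => ?_⟩
  have := hf i
  simpa [ht] using this
end

section
/- Let M : Fin n × Fin n → ℕ be a matrix with every row sum and every column sum equal to k, where k > 0. Then M can be written as a sum M = P₁ + P₂ + ⋯ + P_k where each P_i is a permutation matrix. -/
open Finset

lemma my_hall (n k : ℕ) (hk : 0 < k) (M : Fin n × Fin n → ℕ)
    (hrow : ∀ i : Fin n, ∑ j : Fin n, M (i, j) = k)
    (hcol : ∀ j : Fin n, ∑ i : Fin n, M (i, j) = k) :
    ∃ f : Equiv.Perm (Fin n), ∀ i : Fin n, 0 < M (i, f i) := by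
  set t : Fin n → Finset (Fin n) := fun i => univ.filter (fun j => 0 < M (i, j)) with ht
  have hall : ∀ s : Finset (Fin n), s.card ≤ (s.biUnion t).card := by
    intro s
    have h1 : s.card * k = ∑ i ∈ s, ∑ j : Fin n, M (i, j) := by
      simp [hrow, mul_comm]
    have h2 : ∀ i ∈ s, ∑ j : Fin n, M (i, j) = ∑ j ∈ s.biUnion t, M (i, j) := by
      intro i hi
      rw [← Finset.sum_subset (Finset.subset_univ (s.biUnion t))]
      intro j _ hj
      by_contra h
      exact hj (Finset.mem_biUnion.2 ⟨i, hi, by simp [ht, Nat.pos_of_ne_zero h]⟩)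
    have h3 : s.card * k ≤ (s.biUnion t).card * k := by
      rw [h1, Finset.sum_congr rfl h2, Finset.sum_comm]
      calc ∑ j ∈ s.biUnion t, ∑ i ∈ s, M (i, j)
          ≤ ∑ j ∈ s.biUnion t, ∑ i : Fin n, M (i, j) := by
            apply Finset.sum_le_sum
            intro j _
            exact Finset.sum_le_sum_of_subset (Finset.subset_univ s)
        _ = (s.biUnion t).card * k := by simp [hcol, mul_comm]
    exact Nat.le_of_mul_le_mul_right h3 hk
  obtain ⟨f, hfinj, hf⟩ := (Finset.all_card_le_biUnion_card_iff_existsInjective' t).1 hall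
  refine ⟨Equiv.ofBijective f ((Finite.injective_iff_bijective).1 hfinj), fun i => ?_⟩
  have := hf i
  simp only [ht, Finset.mem_filter] at this
  exact this.2

lemma my_main (n : ℕ) : ∀ (k : ℕ) (M : Fin n × Fin n → ℕ),
    (∀ i : Fin n, ∑ j : Fin n, M (i, j) = k) →
    (∀ j : Fin n, ∑ i : Fin n, M (i, j) = k) →
    ∃ P : Fin k → (Fin n × Fin n → ℕ),
      (∀ t : Fin k, ∃ f : Equiv.Perm (Fin n),
        ∀ i j : Fin n, P t (i, j) = if f i = j then 1 else 0) ∧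
      (∀ p : Fin n × Fin n, M p = ∑ t : Fin k, P t p) := by
  intro k
  induction k with
  | zero =>
    intro M hrow hcol
    refine ⟨fun t => Fin.elim0 t, fun t => Fin.elim0 t, fun p => ?_⟩
    have : M (p.1, p.2) ≤ ∑ j : Fin n, M (p.1, j) :=
      Finset.single_le_sum (f := fun j => M (p.1, j)) (fun j _ => Nat.zero_le _) (Finset.mem_univ p.2)
    rw [hrow] at this
    simpa using Nat.le_zero.1 this
  | succ k ih =>
    intro M hrow hcol
    obtain ⟨f, hf⟩ := my_hall n (k+1) (Nat.succ_pos k) M hrow hcol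
    set Q : Fin n × Fin n → ℕ := fun p => if f p.1 = p.2 then 1 else 0 with hQ
    have hQle : ∀ p, Q p ≤ M p := by
      rintro ⟨i, j⟩
      simp only [hQ]
      split
      · next h => subst h; exact hf i
      · exact Nat.zero_le _
    set M' : Fin n × Fin n → ℕ := fun p => M p - Q p with hM'
    have hQrow : ∀ i, ∑ j : Fin n, Q (i, j) = 1 := by
      intro i; simp [hQ]
    have hQcol : ∀ j, ∑ i : Fin n, Q (i, j) = 1 := by
      intro j
      rw [Finset.sum_eq_single (f.symm j)]
      · simp [hQ]
      · intro i _ hi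
        simp only [hQ]
        rw [if_neg]
        intro h
        exact hi (by simp [← h])
      · simp
    have hrow' : ∀ i, ∑ j : Fin n, M' (i, j) = k := by
      intro i
      simp only [hM']
      rw [Finset.sum_tsub_distrib Finset.univ (fun j _ => hQle (i, j)), hrow, hQrow]
      omega
    have hcol' : ∀ j, ∑ i : Fin n, M' (i, j) = k := by
      intro j
      simp only [hM']
      rw [Finset.sum_tsub_distrib Finset.univ (fun i _ => hQle (i, j)), hcol, hQcol]
      omega
    obtain ⟨P', hP'perm, hP'sum⟩ := ih M' hrow' hcol'
    refine ⟨Fin.cons Q P', ?_, ?_⟩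
    · intro t
      refine Fin.cases ?_ ?_ t
      · exact ⟨f, fun i j => by simp [hQ]⟩
      · intro t'
        obtain ⟨g, hg⟩ := hP'perm t'
        exact ⟨g, fun i j => by simpa using hg i j⟩
    · intro p
      rw [Fin.sum_univ_succ]
      simp only [Fin.cons_zero, Fin.cons_succ]
      rw [← hP'sum p]
      simp only [hM']
      have := hQle p
      omega

theorem stmt_3 (n k : ℕ) (hk : 0 < k) (M : Fin n × Fin n → ℕ)
    (hrow : ∀ i : Fin n, ∑ j : Fin n, M (i, j) = k)
    (hcol : ∀ j : Fin n, ∑ i : Fin n, M (i, j) = k) :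
    ∃ P : Fin k → (Fin n × Fin n → ℕ),
      (∀ t : Fin k, ∃ f : Equiv.Perm (Fin n),
        ∀ i j : Fin n, P t (i, j) = if f i = j then 1 else 0) ∧
      (∀ p : Fin n × Fin n, M p = ∑ t : Fin k, P t p) := by
  exact my_main n k M hrow hcol
end

section
/- There exists a matrix M : Fin 3 × Fin 3 × Fin 3 → ℕ with every line sum equal to 2 whose support does not contain the support of any Latin square; i.e., the statement 'every 3-indexed matrix over ℕ with all line sums equal to some k > 0 has support containing the support of a Latin square' is false. -/
def Mex : Fin 3 × Fin 3 × Fin 3 → ℕ := fun p =>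
  match p with
  | (0,0,2) => 2
  | (0,1,0) => 1 | (0,1,1) => 1 | (0,2,0) => 1 | (0,2,1) => 1
  | (1,0,0) => 1 | (1,0,1) => 1 | (1,1,0) => 1 | (1,1,2) => 1
  | (1,2,1) => 1 | (1,2,2) => 1 | (2,0,0) => 1 | (2,0,1) => 1
  | (2,1,1) => 1 | (2,1,2) => 1 | (2,2,0) => 1 | (2,2,2) => 1
  | _ => 0

theorem stmt_4 :
    ∃ M : Fin 3 × Fin 3 × Fin 3 → ℕ,
      ((∀ a b : Fin 3, ∑ x : Fin 3, M (x, a, b) = 2) ∧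
       (∀ a b : Fin 3, ∑ x : Fin 3, M (a, x, b) = 2) ∧
       (∀ a b : Fin 3, ∑ x : Fin 3, M (a, b, x) = 2)) ∧
      ¬ ∃ L : Fin 3 × Fin 3 × Fin 3 → ℕ,
          (∀ p, L p = 0 ∨ L p = 1) ∧
          (∀ a b : Fin 3, ∑ x : Fin 3, L (x, a, b) = 1) ∧
          (∀ a b : Fin 3, ∑ x : Fin 3, L (a, x, b) = 1) ∧
          (∀ a b : Fin 3, ∑ x : Fin 3, L (a, b, x) = 1) ∧
          (∀ p, L p ≠ 0 → M p ≠ 0) := by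
  refine ⟨Mex, ⟨by decide, by decide, by decide⟩, ?_⟩
  rintro ⟨L, h01, h1, h2, h3, hs⟩
  have hz : ∀ p, Mex p = 0 → L p = 0 := by
    intro p hp
    by_contra h
    exact hs p h hp
  have z1 := hz (0,0,0) rfl
  have z2 := hz (0,0,1) rfl
  have z3 := hz (0,1,2) rfl
  have z4 := hz (0,2,2) rfl
  have z5 := hz (1,0,2) rfl
  have z6 := hz (1,1,1) rfl
  have z7 := hz (1,2,0) rfl
  have z8 := hz (2,0,2) rfl
  have z9 := hz (2,1,0) rfl
  have z10 := hz (2,2,1) rfl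
  have e1 := h1 0 0; have e2 := h1 0 1; have e3 := h1 0 2
  have e4 := h1 1 0; have e5 := h1 1 1; have e6 := h1 1 2
  have e7 := h1 2 0; have e8 := h1 2 1; have e9 := h1 2 2
  have f1 := h2 0 0; have f2 := h2 0 1; have f3 := h2 0 2
  have f4 := h2 1 0; have f5 := h2 1 1; have f6 := h2 1 2
  have f7 := h2 2 0; have f8 := h2 2 1; have f9 := h2 2 2
  have g1 := h3 0 0; have g2 := h3 0 1; have g3 := h3 0 2
  have g4 := h3 1 0; have g5 := h3 1 1; have g6 := h3 1 2
  have g7 := h3 2 0; have g8 := h3 2 1; have g9 := h3 2 2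
  simp only [Fin.sum_univ_three] at e1 e2 e3 e4 e5 e6 e7 e8 e9 f1 f2 f3 f4 f5 f6 f7 f8 f9 g1 g2 g3 g4 g5 g6 g7 g8 g9
  have b1 := h01 (0,0,2)
  have b2 := h01 (0,1,0); have b3 := h01 (0,1,1)
  have b4 := h01 (0,2,0); have b5 := h01 (0,2,1)
  have b6 := h01 (1,0,0); have b7 := h01 (1,0,1)
  have b8 := h01 (1,1,0); have b9 := h01 (1,1,2)
  have b10 := h01 (1,2,1); have b11 := h01 (1,2,2)
  have b12 := h01 (2,0,0); have b13 := h01 (2,0,1)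
  have b14 := h01 (2,1,1); have b15 := h01 (2,1,2)
  have b16 := h01 (2,2,0); have b17 := h01 (2,2,2)
  omega
end

section
/- Let R ∈ ℕ^m, S ∈ ℕ^n, and k a positive integer. If M : Fin m × Fin n → ℕ has row sum vector kR and column sum vector kS, then M = Q₁ + Q₂ + ⋯ + Q_k where each Q_t : Fin m × Fin n → ℕ has row sum vector R and column sum vector S. -/
/-!
Blow up the matrix: split row `i` into `R i` rows and column `j` into `S j` columns so that every
new row and column sums to `k` (a nonnegative integer vector with sum `k r` is a sum of `r` vectors
with sum `k`). The result is the biadjacency matrix of a `k`-regular bipartite multigraph, which by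
Hall's theorem contains a perfect matching; removing it and iterating writes the blown-up matrix as
a sum of `k` permutation matrices. Merging the rows and columns back turns each of them into a
matrix with row sums `R` and column sums `S`.
-/

open Finset

variable {ι α β : Type*} [Fintype ι] [Fintype α]

theorem exists_le_sum_eq (v : ι → ℕ) {c : ℕ} (hc : c ≤ ∑ i, v i) :
    ∃ w ≤ v, ∑ i, w i = c := by
  classical
  induction c with
  | zero => exact ⟨0, fun _ => Nat.zero_le _, by simp⟩
  | succ c ih =>
    obtain ⟨w, hwv, hw⟩ := ih (by omega)
    obtain ⟨i, -, hi⟩ := exists_lt_of_sum_lt (hw.trans_lt hc)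
    refine ⟨w + Pi.single i 1, fun j => ?_, by simp [sum_add_distrib, hw]⟩
    rcases eq_or_ne j i with rfl | hj
    · simpa using hi
    · simpa [hj] using hwv j

theorem exists_sum_eq_of_sum_eq_mul (k : ℕ) {r : ℕ} (v : ι → ℕ) (hv : ∑ i, v i = k * r) :
    ∃ w : Fin r → ι → ℕ, (∀ t, ∑ i, w t i = k) ∧ ∑ t, w t = v := by
  induction r generalizing v with
  | zero =>
    refine ⟨finZeroElim, fun t => t.elim0, ?_⟩
    ext i
    simpa using ((sum_eq_zero_iff.1 hv) i (mem_univ i)).symm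
  | succ r ih =>
    obtain ⟨u, huv, hu⟩ := exists_le_sum_eq v (c := k) (hv ▸ Nat.le_mul_of_pos_right k r.succ_pos)
    obtain ⟨w, hw, hwv⟩ := ih (v - u) <| by
      simp only [Pi.sub_apply]
      rw [sum_tsub_distrib _ fun i _ => huv i, hv, hu, mul_add_one, add_tsub_cancel_right]
    refine ⟨Fin.cons u w, Fin.forall_fin_succ.2 ⟨by simpa using hu, by simpa using hw⟩, ?_⟩
    rw [Fin.sum_cons, hwv, add_tsub_cancel_of_le huv]

def mergeRows {R : α → ℕ} (N : (Σ a, Fin (R a)) → β → ℕ) : α → β → ℕ :=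
  fun a b => ∑ i, N ⟨a, i⟩ b

theorem sum_mergeRows {R : α → ℕ} (N : (Σ a, Fin (R a)) → β → ℕ) (b : β) :
    ∑ a, mergeRows N a b = ∑ x, N x b :=
  (Fintype.sum_sigma fun x => N x b).symm

variable [Fintype β]

def HasMargins (M : α → β → ℕ) (r : α → ℕ) (c : β → ℕ) : Prop :=
  (∀ a, ∑ b, M a b = r a) ∧ ∀ b, ∑ a, M a b = c b

def IsSumWithMargins (M : α → β → ℕ) (k : ℕ) (r : α → ℕ) (c : β → ℕ) : Prop :=
  ∃ Q : Fin k → α → β → ℕ, (∀ t, HasMargins (Q t) r c) ∧ ∑ t, Q t = M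

section Margins

variable {M N : α → β → ℕ} {k : ℕ} {r r' : α → ℕ} {c c' : β → ℕ}

theorem HasMargins.swap (h : HasMargins M r c) : HasMargins (Function.swap M) c r :=
  ⟨h.2, h.1⟩

theorem HasMargins.sum_eq (h : HasMargins M r c) : ∑ a, r a = ∑ b, c b := by
  simp only [← h.1, ← h.2]
  exact sum_comm

theorem HasMargins.tsub (hM : HasMargins M r c) (hN : HasMargins N r' c') (hNM : N ≤ M) :
    HasMargins (M - N) (fun a => r a - r' a) (fun b => c b - c' b) := by
  refine ⟨fun a => ?_, fun b => ?_⟩ <;> simp only [Pi.sub_apply]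
  · rw [sum_tsub_distrib _ fun b _ => hNM a b, hM.1, hN.1]
  · rw [sum_tsub_distrib _ fun a _ => hNM a b, hM.2, hN.2]

theorem IsSumWithMargins.swap (h : IsSumWithMargins M k r c) :
    IsSumWithMargins (Function.swap M) k c r := by
  obtain ⟨Q, hQ, rfl⟩ := h
  refine ⟨fun t => Function.swap (Q t), fun t => (hQ t).swap, ?_⟩
  ext b a
  simp [Function.swap, Finset.sum_apply]

end Margins

theorem hasMargins_ite_equiv [DecidableEq β] (e : α ≃ β) :
    HasMargins (fun a b => if e a = b then 1 else 0) (fun _ => 1) (fun _ => 1) :=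
  ⟨fun a => by simp, fun b => by rw [← e.symm.sum_comp]; simp⟩

theorem HasMargins.exists_equiv_pos {M : α → β → ℕ} {s : ℕ} (hs : 0 < s)
    (hM : HasMargins M (fun _ => s) (fun _ => s)) : ∃ e : α ≃ β, ∀ a, 0 < M a (e a) := by
  classical
  let U (a : α) : Finset β := {b | M a b ≠ 0}
  have hall (A : Finset α) : #A ≤ #(A.biUnion U) := by
    refine Nat.le_of_mul_le_mul_left ?_ hs
    calc s * #A = ∑ a ∈ A, ∑ b ∈ U a, M a b := by simp [U, sum_filter_ne_zero, hM.1, mul_comm]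
      _ ≤ ∑ a ∈ A, ∑ b ∈ A.biUnion U, M a b :=
        sum_le_sum fun a ha => sum_le_sum_of_subset (subset_biUnion_of_mem U ha)
      _ ≤ ∑ a, ∑ b ∈ A.biUnion U, M a b := sum_le_sum_of_subset (subset_univ A)
      _ = s * #(A.biUnion U) := by rw [sum_comm]; simp [hM.2, mul_comm]
  obtain ⟨f, hf, hfU⟩ := (all_card_le_biUnion_card_iff_exists_injective U).1 hall
  have hcard : Fintype.card α = Fintype.card β :=
    Nat.eq_of_mul_eq_mul_right hs (by simpa using hM.sum_eq)
  refine ⟨.ofBijective f ((Fintype.bijective_iff_injective_and_card f).2 ⟨hf, hcard⟩), fun a => ?_⟩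
  simpa [U, Nat.pos_iff_ne_zero] using hfU a

theorem HasMargins.isSumWithMargins_one {M : α → β → ℕ} {k : ℕ}
    (hM : HasMargins M (fun _ => k) (fun _ => k)) :
    IsSumWithMargins M k (fun _ => 1) (fun _ => 1) := by
  classical
  induction k generalizing M with
  | zero =>
    refine ⟨finZeroElim, fun t => t.elim0, ?_⟩
    ext a b
    simpa using ((sum_eq_zero_iff.1 (hM.1 a)) b (mem_univ b)).symm
  | succ k ih =>
    obtain ⟨e, he⟩ := hM.exists_equiv_pos k.succ_pos
    set P : α → β → ℕ := fun a b => if e a = b then 1 else 0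
    have hPM : P ≤ M := fun a b => by
      by_cases h : e a = b
      · simpa [P, h] using h ▸ he a
      · simp [P, h]
    obtain ⟨Q, hQ, hQM⟩ := ih (by simpa using hM.tsub (hasMargins_ite_equiv e) hPM)
    refine ⟨Fin.cons P Q, Fin.forall_fin_succ.2 ⟨by simpa using hasMargins_ite_equiv e,
      by simpa using hQ⟩, ?_⟩
    rw [Fin.sum_cons, hQM, add_tsub_cancel_of_le hPM]

section MergeRows

variable {R : α → ℕ}

theorem exists_mergeRows_eq {M : α → β → ℕ} {k : ℕ} {c : β → ℕ} (hM : HasMargins M (k • R) c) :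
    ∃ N : (Σ a, Fin (R a)) → β → ℕ, HasMargins N (fun _ => k) c ∧ mergeRows N = M := by
  choose w hw hwM using fun a => exists_sum_eq_of_sum_eq_mul k (M a) (hM.1 a)
  have hNM : mergeRows (fun x b => w x.1 x.2 b) = M := by
    ext a b
    simp only [mergeRows, ← hwM a, Finset.sum_apply]
  refine ⟨fun x b => w x.1 x.2 b, ⟨fun x => hw x.1 x.2, fun b => ?_⟩, hNM⟩
  rw [← sum_mergeRows, hNM, hM.2]

theorem IsSumWithMargins.mergeRows {N : (Σ a, Fin (R a)) → β → ℕ} {k : ℕ} {c : β → ℕ}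
    (hN : IsSumWithMargins N k (fun _ => 1) c) : IsSumWithMargins (mergeRows N) k R c := by
  obtain ⟨Q, hQ, rfl⟩ := hN
  refine ⟨fun t => _root_.mergeRows (Q t), fun t => ⟨fun a => ?_, fun b => ?_⟩, ?_⟩
  · simp [_root_.mergeRows, sum_comm (s := (univ : Finset β)), (hQ t).1]
  · rw [sum_mergeRows, (hQ t).2]
  · ext a b
    simp [_root_.mergeRows, Finset.sum_apply, sum_comm (s := (univ : Finset (Fin k)))]

end MergeRows

theorem HasMargins.isSumWithMargins {M : α → β → ℕ} {k : ℕ} {R : α → ℕ} {S : β → ℕ}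
    (hM : HasMargins M (k • R) (k • S)) : IsSumWithMargins M k R S := by
  obtain ⟨N, hN, rfl⟩ := exists_mergeRows_eq hM
  obtain ⟨N', hN', hN'N⟩ := exists_mergeRows_eq hN.swap
  have hNswap : IsSumWithMargins (Function.swap N) k S (fun _ => 1) :=
    hN'N ▸ hN'.isSumWithMargins_one.mergeRows
  exact hNswap.swap.mergeRows

theorem stmt_8_general (m n k : ℕ) (R : Fin m → ℕ) (S : Fin n → ℕ)
    (M : Fin m × Fin n → ℕ)
    (hrow : ∀ i, ∑ j : Fin n, M (i, j) = k * R i)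
    (hcol : ∀ j, ∑ i : Fin m, M (i, j) = k * S j) :
    ∃ Q : Fin k → (Fin m × Fin n → ℕ),
      (∀ t, ∀ i, ∑ j : Fin n, Q t (i, j) = R i) ∧
      (∀ t, ∀ j, ∑ i : Fin m, Q t (i, j) = S j) ∧
      (∀ p, M p = ∑ t : Fin k, Q t p) := by
  obtain ⟨Q, hQ, hQM⟩ :=
    HasMargins.isSumWithMargins (M := Function.curry M) (k := k) (R := R) (S := S) ⟨hrow, hcol⟩
  refine ⟨fun t p => Q t p.1 p.2, fun t => (hQ t).1, fun t => (hQ t).2, fun p => ?_⟩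
  simpa [Finset.sum_apply] using (congrFun (congrFun hQM p.1) p.2).symm

theorem stmt_8 (m n k : ℕ) (hk : 0 < k) (R : Fin m → ℕ) (S : Fin n → ℕ)
    (M : Fin m × Fin n → ℕ)
    (hrow : ∀ i, ∑ j : Fin n, M (i, j) = k * R i)
    (hcol : ∀ j, ∑ i : Fin m, M (i, j) = k * S j) :
    ∃ Q : Fin k → (Fin m × Fin n → ℕ),
      (∀ t, ∀ i, ∑ j : Fin n, Q t (i, j) = R i) ∧
      (∀ t, ∀ j, ∑ i : Fin m, Q t (i, j) = S j) ∧
      (∀ p, M p = ∑ t : Fin k, Q t p) :=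
  stmt_8_general m n k R S M hrow hcol
end

section
/- Let R ∈ ℕ^m, S ∈ ℕ^n with ∑_i R_i = ∑_j S_j, let I ⊆ Fin n, and let k be a positive integer. Suppose M : Fin m × Fin n → ℕ satisfies: every row sum of M is at most k·R_i, every column sum is at most k·S_j, and the column sum at each j ∈ I equals exactly k·S_j. Then M = Q₁ + ⋯ + Q_k where each Q_t satisfies: row sums at most R_i, column sums at most S_j, and column sum equal to S_j for each j ∈ I. -/
/-!
Pad `M` with one extra row and column absorbing the slack, so that all row and column sums
become exactly `k * R i` and `k * S j`. Splitting row `i` into `R i` rows and column `j` into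
`S j` columns, each of sum `k`, gives a `k`-regular bipartite multigraph; by Hall's theorem it
has a perfect matching, and peeling matchings off one at a time writes it as a sum of `k`
permutation matrices. Collapsing each back to the blocks gives the `Q t`. On a column `j ∈ I`
the `k` pieces have sums `≤ S j` adding up to `k * S j`, so each equals `S j`.
-/

open Finset

variable {α β : Type*} [Fintype α] [Fintype β]

theorem exists_equiv_forall_pos_of_sums_eq {c : ℕ} (hc : 0 < c) (B : α → β → ℕ)
    (hrow : ∀ a, ∑ b, B a b = c) (hcol : ∀ b, ∑ a, B a b = c) :
    ∃ e : α ≃ β, ∀ a, 0 < B a (e a) := by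
  classical
  have hall (A : Finset α) : #A ≤ #{b | ∃ a ∈ A, 0 < B a b} := by
    set N : Finset β := {b | ∃ a ∈ A, 0 < B a b}
    refine Nat.le_of_mul_le_mul_left ?_ hc
    calc c * #A = ∑ a ∈ A, ∑ b ∈ N, B a b := by
          rw [mul_comm, ← smul_eq_mul, ← sum_const]
          refine sum_congr rfl fun a ha => ?_
          rw [← hrow a, sum_subset (subset_univ N)]
          intro b _ hb
          by_contra h
          exact hb (mem_filter.2 ⟨mem_univ b, a, ha, Nat.pos_of_ne_zero h⟩)
      _ ≤ ∑ a, ∑ b ∈ N, B a b := sum_le_sum_of_subset (subset_univ A)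
      _ = c * #N := by rw [sum_comm, mul_comm, ← smul_eq_mul, ← sum_const]; simp [hcol]
  obtain ⟨f, hf, hpos⟩ := (Fintype.all_card_le_filter_rel_iff_exists_injective _).1 hall
  have hcard : Fintype.card α = Fintype.card β := by
    refine Nat.eq_of_mul_eq_mul_left hc ?_
    calc c * Fintype.card α = ∑ a, ∑ b, B a b := by simp [hrow, mul_comm]
      _ = ∑ b, ∑ a, B a b := sum_comm
      _ = c * Fintype.card β := by simp [hcol, mul_comm]
  exact ⟨.ofBijective f ((Fintype.bijective_iff_injective_and_card f).2 ⟨hf, hcard⟩), hpos⟩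

theorem Equiv.sum_ite_apply_eq [DecidableEq β] (e : α ≃ β) (b : β) :
    ∑ a, (if e a = b then 1 else 0 : ℕ) = 1 :=
  (e.sum_comp fun b' => if b' = b then 1 else 0).trans (by simp)

theorem exists_equivs_sum_eq_of_sums_eq [DecidableEq β] (k : ℕ) (B : α → β → ℕ)
    (hrow : ∀ a, ∑ b, B a b = k) (hcol : ∀ b, ∑ a, B a b = k) :
    ∃ F : Fin k → α ≃ β, ∀ a b, B a b = ∑ t, if F t a = b then 1 else 0 := by
  induction k generalizing B with
  | zero => exact ⟨finZeroElim, fun a b => by simpa using (sum_eq_zero_iff.1 (hrow a)) b⟩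
  | succ k ih =>
    obtain ⟨e, he⟩ := exists_equiv_forall_pos_of_sums_eq k.succ_pos B hrow hcol
    set P : α → β → ℕ := fun a b => if e a = b then 1 else 0
    have hB a b : B a b = (B a b - P a b) + P a b := by
      rcases eq_or_ne (e a) b with rfl | h
      · have := he a; simp only [P, if_true]; omega
      · simp [P, h]
    have hrow' a : ∑ b, (B a b - P a b) = k := by
      have := hrow a
      rw [sum_congr rfl fun b _ => hB a b, sum_add_distrib] at this
      rw [show ∑ b, P a b = 1 by simp [P]] at this
      omega
    have hcol' b : ∑ a, (B a b - P a b) = k := by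
      have := hcol b
      rw [sum_congr rfl fun a _ => hB a b, sum_add_distrib, e.sum_ite_apply_eq] at this
      omega
    obtain ⟨F, hF⟩ := ih _ hrow' hcol'
    refine ⟨Fin.cons e F, fun a b => ?_⟩
    rw [Fin.sum_univ_succ, hB a b, hF a b, add_comm]
    simp [P]

variable {ι κ : Type*} [Fintype κ]

theorem exists_blowup_of_row_sums_eq_mul (M : ι → κ → ℕ) (k : ℕ) (R : ι → ℕ)
    (hrow : ∀ i, ∑ j, M i j = k * R i) :
    ∃ N : (Σ i, Fin (R i)) → κ → ℕ, (∀ x, ∑ j, N x j = k) ∧ ∀ i j, ∑ a, N ⟨i, a⟩ j = M i j := by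
  classical
  -- the `u`-th unit of `M i j` goes to the copy `(g i ⟨j, u⟩).2` of row `i`
  have g i : (Σ j, Fin (M i j)) ≃ Fin k × Fin (R i) := Fintype.equivOfCardEq (by simp [hrow])
  refine ⟨fun x j => ∑ u : Fin (M x.1 j), if (g x.1 ⟨j, u⟩).2 = x.2 then 1 else 0, ?_, ?_⟩
  · rintro ⟨i, a⟩
    calc ∑ j, ∑ u : Fin (M i j), (if (g i ⟨j, u⟩).2 = a then 1 else 0)
        = ∑ x : Σ j, Fin (M i j), if (g i x).2 = a then 1 else 0 := by
          rw [Fintype.sum_sigma]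
      _ = ∑ p : Fin k × Fin (R i), if p.2 = a then 1 else 0 :=
          (g i).sum_comp fun p => if p.2 = a then 1 else 0
      _ = k := by rw [Fintype.sum_prod_type]; simp
  · intro i j
    calc ∑ a : Fin (R i), ∑ u : Fin (M i j), (if (g i ⟨j, u⟩).2 = a then 1 else 0)
        = ∑ u : Fin (M i j), ∑ a : Fin (R i), (if (g i ⟨j, u⟩).2 = a then 1 else 0) := sum_comm
      _ = M i j := by simp

variable [Fintype ι]

theorem exists_decomp_of_sums_eq_mul (M : ι → κ → ℕ) (k : ℕ) (R : ι → ℕ) (S : κ → ℕ)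
    (hrow : ∀ i, ∑ j, M i j = k * R i) (hcol : ∀ j, ∑ i, M i j = k * S j) :
    ∃ Q : Fin k → ι → κ → ℕ, (∀ t i, ∑ j, Q t i j = R i) ∧ (∀ t j, ∑ i, Q t i j = S j) ∧
      ∀ i j, M i j = ∑ t, Q t i j := by
  classical
  obtain ⟨N, hNrow, hN⟩ := exists_blowup_of_row_sums_eq_mul M k R hrow
  have hNcol j : ∑ x, N x j = k * S j := by simp [Fintype.sum_sigma, hN, hcol]
  obtain ⟨B, hBrow, hB⟩ := exists_blowup_of_row_sums_eq_mul (fun j x => N x j) k S hNcol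
  have hBcol x : ∑ y, B y x = k := by simp [Fintype.sum_sigma, hB, hNrow]
  obtain ⟨F, hF⟩ := exists_equivs_sum_eq_of_sums_eq k (fun x y => B y x) hBcol hBrow
  refine ⟨fun t i j => ∑ a, ∑ b, if F t ⟨i, a⟩ = ⟨j, b⟩ then 1 else 0, ?_, ?_, ?_⟩
  · intro t i
    calc ∑ j, ∑ a, ∑ b, (if F t ⟨i, a⟩ = ⟨j, b⟩ then 1 else 0)
        = ∑ a, ∑ y, if F t ⟨i, a⟩ = y then 1 else 0 := by
          rw [sum_comm]; simp only [Fintype.sum_sigma]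
      _ = R i := by simp
  · intro t j
    calc ∑ i, ∑ a, ∑ b, (if F t ⟨i, a⟩ = ⟨j, b⟩ then 1 else 0)
        = ∑ b, ∑ x, if F t x = ⟨j, b⟩ then 1 else 0 := by rw [sum_comm, Fintype.sum_sigma]
      _ = S j := by simp only [Equiv.sum_ite_apply_eq]; simp
  · intro i j
    calc M i j = ∑ a, ∑ b, B ⟨j, b⟩ ⟨i, a⟩ := by simp [hB, hN]
      _ = ∑ t, ∑ a, ∑ b, if F t ⟨i, a⟩ = ⟨j, b⟩ then 1 else 0 := by
        simp only [hF, sum_comm (γ := Fin k)]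

def padToMargins (M : ι → κ → ℕ) (R : ι → ℕ) (S : κ → ℕ) : Option ι → Option κ → ℕ
  | some i, some j => M i j
  | some i, none => R i - ∑ j, M i j
  | none, some j => S j - ∑ i, M i j
  | none, none => ∑ i, ∑ j, M i j

section padToMargins

variable (M : ι → κ → ℕ) (R : ι → ℕ) (S : κ → ℕ)

theorem sum_padToMargins_some_row {i : ι} (h : ∑ j, M i j ≤ R i) :
    ∑ j, padToMargins M R S (some i) j = R i := by
  simp [Fintype.sum_option, padToMargins]; omega

theorem sum_padToMargins_none_row (h : ∀ j, ∑ i, M i j ≤ S j) :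
    ∑ j, padToMargins M R S none j = ∑ j, S j := by
  simp only [Fintype.sum_option, padToMargins]
  rw [sum_comm, add_comm, ← sum_add_distrib]
  exact sum_congr rfl fun j _ => Nat.sub_add_cancel (h j)

theorem sum_padToMargins_some_col {j : κ} (h : ∑ i, M i j ≤ S j) :
    ∑ i, padToMargins M R S i (some j) = S j := by
  simp [Fintype.sum_option, padToMargins]; omega

theorem sum_padToMargins_none_col (h : ∀ i, ∑ j, M i j ≤ R i) :
    ∑ i, padToMargins M R S i none = ∑ i, R i := by
  simp only [Fintype.sum_option, padToMargins]
  rw [add_comm, ← sum_add_distrib]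
  exact sum_congr rfl fun i _ => Nat.sub_add_cancel (h i)

end padToMargins

theorem exists_decomp_of_sums_le (M : ι → κ → ℕ) (k : ℕ) (R : ι → ℕ) (S : κ → ℕ)
    (hrow : ∀ i, ∑ j, M i j ≤ k * R i) (hcol : ∀ j, ∑ i, M i j ≤ k * S j) :
    ∃ Q : Fin k → ι → κ → ℕ, (∀ t i, ∑ j, Q t i j ≤ R i) ∧ (∀ t j, ∑ i, Q t i j ≤ S j) ∧
      ∀ i j, M i j = ∑ t, Q t i j := by
  set P := padToMargins M (k * R ·) (k * S ·)
  have hProw : ∀ i, ∑ j, P i j = k * i.elim (∑ j, S j) R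
    | some i => sum_padToMargins_some_row _ _ _ (hrow i)
    | none => (sum_padToMargins_none_row _ _ _ hcol).trans (mul_sum ..).symm
  have hPcol : ∀ j, ∑ i, P i j = k * j.elim (∑ i, R i) S
    | some j => sum_padToMargins_some_col _ _ _ (hcol j)
    | none => (sum_padToMargins_none_col _ _ _ hrow).trans (mul_sum ..).symm
  obtain ⟨Q, hQrow, hQcol, hPQ⟩ := exists_decomp_of_sums_eq_mul P k _ _ hProw hPcol
  refine ⟨fun t i j => Q t (some i) (some j), fun t i => ?_, fun t j => ?_,
    fun i j => hPQ (some i) (some j)⟩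
  · exact le_add_self.trans_eq ((Fintype.sum_option _).symm.trans (hQrow t (some i)))
  · exact le_add_self.trans_eq ((Fintype.sum_option _).symm.trans (hQcol t (some j)))

theorem stmt_9_general (m n k : ℕ) (R : Fin m → ℕ) (S : Fin n → ℕ)
    (I : Set (Fin n)) (M : Fin m × Fin n → ℕ)
    (hrow : ∀ i, ∑ j : Fin n, M (i, j) ≤ k * R i)
    (hcol : ∀ j, ∑ i : Fin m, M (i, j) ≤ k * S j)
    (hI : ∀ j ∈ I, ∑ i : Fin m, M (i, j) = k * S j) :
    ∃ Q : Fin k → (Fin m × Fin n → ℕ),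
      (∀ t, ∀ i, ∑ j : Fin n, Q t (i, j) ≤ R i) ∧
      (∀ t, ∀ j, ∑ i : Fin m, Q t (i, j) ≤ S j) ∧
      (∀ t, ∀ j ∈ I, ∑ i : Fin m, Q t (i, j) = S j) ∧
      (∀ p, M p = ∑ t : Fin k, Q t p) := by
  obtain ⟨Q, hQrow, hQcol, hMQ⟩ := exists_decomp_of_sums_le (fun i j => M (i, j)) k R S hrow hcol
  refine ⟨fun t p => Q t p.1 p.2, hQrow, hQcol, fun t j hj => ?_, fun p => hMQ p.1 p.2⟩
  have hsum : ∑ t, ∑ i, Q t i j = ∑ _t : Fin k, S j := by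
    rw [sum_comm]; simp [← hMQ, hI j hj]
  exact (sum_eq_sum_iff_of_le fun t _ => hQcol t j).1 hsum t (mem_univ t)

theorem stmt_9 (m n k : ℕ) (hk : 0 < k) (R : Fin m → ℕ) (S : Fin n → ℕ)
    (hRS : ∑ i, R i = ∑ j, S j) (I : Set (Fin n)) (M : Fin m × Fin n → ℕ)
    (hrow : ∀ i, ∑ j : Fin n, M (i, j) ≤ k * R i)
    (hcol : ∀ j, ∑ i : Fin m, M (i, j) ≤ k * S j)
    (hI : ∀ j ∈ I, ∑ i : Fin m, M (i, j) = k * S j) :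
    ∃ Q : Fin k → (Fin m × Fin n → ℕ),
      (∀ t, ∀ i, ∑ j : Fin n, Q t (i, j) ≤ R i) ∧
      (∀ t, ∀ j, ∑ i : Fin m, Q t (i, j) ≤ S j) ∧
      (∀ t, ∀ j ∈ I, ∑ i : Fin m, Q t (i, j) = S j) ∧
      (∀ p, M p = ∑ t : Fin k, Q t p) :=
  stmt_9_general m n k R S I M hrow hcol hI
end

section
/- (Hilton) Let M : Fin k × Fin k × Fin k → ℕ and let r₁, …, r_k be positive integers such that every line sum satisfies M(l^t_{ij}) = r_i·r_j for all t ∈ {1,2,3} and all i,j ∈ Fin k. Then there exist n = ∑ r_i, a partition σ = {P₁,…,P_k} of Fin n with |P_i| = r_i, and a Latin square L : Fin n × Fin n × Fin n → ℕ such that M = ((L ∘₁ σ) ∘₂ σ) ∘₃ σ. -/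
/-- Quotient of a 3-indexed matrix by the partition of `Fin n` given by the
blocks of the map `c : Fin n → Fin k`, collapsing all three indices. -/
def tripleQuot {n k : ℕ} (M : Fin n × Fin n × Fin n → ℕ) (c : Fin n → Fin k)
    (i j l : Fin k) : ℕ :=
  ∑ p : Fin n × Fin n × Fin n,
    if c p.1 = i ∧ c p.2.1 = j ∧ c p.2.2 = l then M p else 0

/-- Cardinality of the block `P_i` of the partition given by `c`. -/
def blockCard {n k : ℕ} (c : Fin n → Fin k) (i : Fin k) : ℕ :=
  (Finset.univ.filter fun x => c x = i).card

namespace Hilton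


/-- size of the intersection `[p,q) ∩ [c,d)` -/
def cnt (p q c d : ℕ) : ℕ := min q d - max p c

lemma cnt_symm (p q c d : ℕ) : cnt p q c d = cnt c d p q := by
  unfold cnt; omega

/-- prefix sums of weights along an injective key -/
def pre {κ : Type*} [Fintype κ] (key : κ → ℕ) (w : κ → ℕ) (m : ℕ) : ℕ :=
  ∑ u, if key u < m then w u else 0

lemma pre_mono {κ : Type*} [Fintype κ] (key : κ → ℕ) (w : κ → ℕ) :
    Monotone (pre key w) := by
  intro m m' h
  exact Finset.sum_le_sum (fun u _ => by split_ifs <;> omega)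

lemma pre_zero {κ : Type*} [Fintype κ] (key : κ → ℕ) (w : κ → ℕ) : pre key w 0 = 0 := by
  simp [pre]

lemma pre_top {κ : Type*} [Fintype κ] (key : κ → ℕ) (w : κ → ℕ) (M : ℕ)
    (hM : ∀ u, key u < M) : pre key w M = ∑ u, w u := by
  unfold pre
  exact Finset.sum_congr rfl (fun u _ => by rw [if_pos (hM u)])

lemma pre_le_top {κ : Type*} [Fintype κ] (key : κ → ℕ) (w : κ → ℕ) (m : ℕ) :
    pre key w m ≤ ∑ u, w u :=
  Finset.sum_le_sum (fun u _ => by split_ifs <;> omega)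

lemma pre_succ {κ : Type*} [Fintype κ] [DecidableEq κ] (key : κ → ℕ)
    (hinj : Function.Injective key) (w : κ → ℕ) (u₀ : κ) :
    pre key w (key u₀ + 1) = pre key w (key u₀) + w u₀ := by
  unfold pre
  have : ∀ u, (if key u < key u₀ + 1 then w u else 0)
      = (if key u < key u₀ then w u else 0) + (if u = u₀ then w u else 0) := by
    intro u
    by_cases h : u = u₀
    · subst h; simp
    · have : key u ≠ key u₀ := fun hk => h (hinj hk)
      split_ifs <;> omega
  rw [Finset.sum_congr rfl (fun u _ => this u), Finset.sum_add_distrib,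
    Finset.sum_ite_eq' Finset.univ u₀ w, if_pos (Finset.mem_univ u₀)]

lemma pre_succ_notkey {κ : Type*} [Fintype κ] (key : κ → ℕ) (w : κ → ℕ) (m : ℕ)
    (hm : ∀ u, key u ≠ m) : pre key w (m + 1) = pre key w m := by
  unfold pre
  refine Finset.sum_congr rfl (fun u _ => ?_)
  have := hm u
  split_ifs <;> omega

/-- telescoping sum of interval intersections over consecutive intervals -/
lemma sum_cnt (p q : ℕ) (S : ℕ → ℕ) (hS : Monotone S) (m : ℕ) :
    ∑ x ∈ Finset.range m, cnt p q (S x) (S (x + 1))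
      = min q (max p (S m)) - min q (max p (S 0)) := by
  induction m with
  | zero => simp
  | succ m ih =>
      rw [Finset.sum_range_succ, ih]
      have h1 : S 0 ≤ S m := hS (Nat.zero_le m)
      have h2 : S m ≤ S (m + 1) := hS (Nat.le_succ m)
      unfold cnt
      omega

lemma cnt_self (p q c : ℕ) : cnt p q c c = 0 := by unfold cnt; omega

/-- summing chunk intersections with a fixed interval `[c,d) ⊆ [0, P*r)` -/
lemma sum_chunks (P r c d : ℕ) (hcd : c ≤ d) (hd : d ≤ P * r) :
    ∑ m ∈ Finset.range P, cnt (m * r) ((m + 1) * r) c d = d - c := by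
  have : ∀ m, cnt (m * r) ((m + 1) * r) c d = cnt c d (m * r) ((m + 1) * r) :=
    fun m => cnt_symm _ _ _ _
  rw [Finset.sum_congr rfl (fun m _ => this m)]
  have hmono : Monotone (fun m : ℕ => m * r) := fun x y h => Nat.mul_le_mul_right r h
  rw [sum_cnt c d (fun m => m * r) hmono P]
  simp only [Nat.zero_mul]
  omega

/-- chopping: sum over all units of the intersection of the fixed chunk `[p,q)`
with the unit's weight interval equals `q - p`. -/
lemma sum_key_cnt {κ : Type*} [Fintype κ] [DecidableEq κ] (key : κ → ℕ)
    (hinj : Function.Injective key) (w : κ → ℕ) (M : ℕ) (hM : ∀ u, key u < M)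
    (p q : ℕ) (hpq : p ≤ q) (hq : q ≤ ∑ u, w u) :
    ∑ u, cnt p q (pre key w (key u)) (pre key w (key u + 1)) = q - p := by
  classical
  set F : ℕ → ℕ := fun m => cnt p q (pre key w m) (pre key w (m + 1)) with hF
  have himg : ∑ u, F (key u) = ∑ m ∈ Finset.univ.image key, F m :=
    (Finset.sum_image (fun a _ b _ h => hinj h)).symm
  have hsub : Finset.univ.image key ⊆ Finset.range M := by
    intro m hm
    obtain ⟨u, _, rfl⟩ := Finset.mem_image.mp hm
    exact Finset.mem_range.mpr (hM u)
  have hzero : ∀ m ∈ Finset.range M, m ∉ Finset.univ.image key → F m = 0 := by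
    intro m _ hm
    have : ∀ u, key u ≠ m := by
      intro u hu
      exact hm (Finset.mem_image.mpr ⟨u, Finset.mem_univ u, hu⟩)
    rw [hF]
    simp only
    rw [pre_succ_notkey key w m this, cnt_self]
  have : ∑ m ∈ Finset.univ.image key, F m = ∑ m ∈ Finset.range M, F m :=
    Finset.sum_subset hsub hzero
  rw [himg, this, hF]
  rw [sum_cnt p q (pre key w) (pre_mono key w) M]
  rw [pre_zero, pre_top key w M hM]
  omega


section Transport

variable {a b r : ℕ} (A : Fin a → Fin b → ℕ) (ρ : Fin a → ℕ) (γ : Fin b → ℕ)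

/-- helper: sum over a sigma fiber -/
lemma sum_fiber {ρ : Fin a → ℕ} (g : (Σ j : Fin a, Fin (ρ j)) → ℕ) (j : Fin a) :
    ∑ u ∈ Finset.univ.filter (fun u : Σ j : Fin a, Fin (ρ j) => u.1 = j), g u
      = ∑ t : Fin (ρ j), g ⟨j, t⟩ := by
  rw [Finset.sum_filter, ← Finset.univ_sigma_univ, Finset.sum_sigma]
  have : ∀ j' : Fin a, (∑ t : Fin (ρ j'), if j' = j then g ⟨j', t⟩ else 0)
      = if j' = j then ∑ t : Fin (ρ j'), g ⟨j', t⟩ else 0 := by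
    intro j'
    by_cases h : j' = j <;> simp [h]
  rw [Finset.sum_congr rfl (fun j' _ => this j')]
  rw [Finset.sum_ite_eq' Finset.univ j (fun j' => ∑ t : Fin (ρ j'), g ⟨j', t⟩)]
  simp

/-- The transportation lemma: a nonnegative integer matrix with margins `r*ρ`, `r*γ`
dominates one with margins `ρ`, `γ`. -/
lemma exists_sub_matrix (hr : 1 ≤ r)
    (hrow : ∀ j, ∑ l, A j l = r * ρ j) (hcol : ∀ l, ∑ j, A j l = r * γ l) :
    ∃ N : Fin a → Fin b → ℕ, (∀ j l, N j l ≤ A j l) ∧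
      (∀ j, ∑ l, N j l = ρ j) ∧ (∀ l, ∑ j, N j l = γ l) := by
  classical
  set U := Σ j : Fin a, Fin (ρ j) with hU
  set V := Σ l : Fin b, Fin (γ l) with hV
  -- first chop: rows
  set m₁ : U → Fin b → ℕ := fun u l =>
    cnt (↑u.2 * r) ((↑u.2 + 1) * r) (pre Fin.val (A u.1) ↑l) (pre Fin.val (A u.1) (↑l + 1))
    with hm₁
  have sum_m₁_row : ∀ u : U, ∑ l, m₁ u l = r := by
    intro u
    have h := sum_key_cnt (Fin.val (n := b)) Fin.val_injective (A u.1) b (fun l => l.isLt)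
      (↑u.2 * r) ((↑u.2 + 1) * r) (by nlinarith) (by
        rw [hrow u.1]
        have : (↑u.2 + 1) ≤ ρ u.1 := u.2.isLt
        calc (↑u.2 + 1) * r ≤ ρ u.1 * r := Nat.mul_le_mul_right r this
        _ = r * ρ u.1 := Nat.mul_comm _ _)
    have hsub : (↑u.2 + 1) * r - ↑u.2 * r = r := by rw [Nat.add_mul]; omega
    calc ∑ l, m₁ u l = (↑u.2 + 1) * r - ↑u.2 * r := h
    _ = r := hsub
  have sum_m₁_col : ∀ (j : Fin a) (l : Fin b), ∑ t : Fin (ρ j), m₁ ⟨j, t⟩ l = A j l := by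
    intro j l
    have hc : pre Fin.val (A j) ↑l ≤ pre Fin.val (A j) (↑l + 1) :=
      pre_mono _ _ (Nat.le_succ _)
    have hd : pre Fin.val (A j) (↑l + 1) ≤ ρ j * r := by
      calc pre Fin.val (A j) (↑l + 1) ≤ ∑ y, A j y := pre_le_top _ _ _
      _ = r * ρ j := hrow j
      _ = ρ j * r := Nat.mul_comm _ _
    have := sum_chunks (ρ j) r _ _ hc hd
    have hstep := pre_succ (Fin.val (n := b)) Fin.val_injective (A j) l
    rw [Fin.sum_univ_eq_sum_range
      (fun t => cnt (t * r) ((t + 1) * r) (pre Fin.val (A j) ↑l) (pre Fin.val (A j) (↑l + 1)))]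
    rw [this]
    omega
  -- key for U
  set R := (∑ j, ρ j) + 1 with hR
  have hρR : ∀ j, ρ j < R := by
    intro j
    have : ρ j ≤ ∑ j, ρ j := Finset.single_le_sum (fun i _ => Nat.zero_le _) (Finset.mem_univ j)
    omega
  set keyU : U → ℕ := fun u => ↑u.1 * R + ↑u.2 with hkeyU
  have keyU_inj : Function.Injective keyU := by
    intro u v huv
    obtain ⟨j, t⟩ := u
    obtain ⟨j', t'⟩ := v
    simp only [hkeyU] at huv
    have ht : (↑t : ℕ) < R := lt_trans t.isLt (hρR j)
    have ht' : (↑t' : ℕ) < R := lt_trans t'.isLt (hρR j')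
    have h1 : (↑j : ℕ) = ↑j' := by
      rcases lt_trichotomy (↑j : ℕ) ↑j' with h | h | h
      · nlinarith
      · exact h
      · nlinarith
    have h1' : j = j' := Fin.ext h1
    subst h1'
    have h2 : t = t' := Fin.ext (by omega)
    rw [h2]
  have keyU_lt : ∀ u : U, keyU u < a * R := by
    intro u
    have h1 : (↑u.1 : ℕ) + 1 ≤ a := u.1.isLt
    have h2 : (↑u.2 : ℕ) < R := lt_trans u.2.isLt (hρR u.1)
    calc keyU u < ↑u.1 * R + R := by simp only [hkeyU]; omega
    _ = (↑u.1 + 1) * R := by ring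
    _ ≤ a * R := Nat.mul_le_mul_right R h1
  -- total of m₁ per column
  have colsum_m₁ : ∀ l, ∑ u : U, m₁ u l = r * γ l := by
    intro l
    rw [← Finset.univ_sigma_univ, Finset.sum_sigma]
    calc ∑ j, ∑ t : Fin (ρ j), m₁ ⟨j, t⟩ l = ∑ j, A j l :=
          Finset.sum_congr rfl (fun j _ => sum_m₁_col j l)
    _ = r * γ l := hcol l
  -- second chop: columns
  set m₂ : U → V → ℕ := fun u v =>
    cnt (↑v.2 * r) ((↑v.2 + 1) * r) (pre keyU (fun u' => m₁ u' v.1) (keyU u))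
      (pre keyU (fun u' => m₁ u' v.1) (keyU u + 1)) with hm₂
  have sum_m₂_right : ∀ (u : U) (l : Fin b), ∑ s : Fin (γ l), m₂ u ⟨l, s⟩ = m₁ u l := by
    intro u l
    have hc : pre keyU (fun u' => m₁ u' l) (keyU u) ≤ pre keyU (fun u' => m₁ u' l) (keyU u + 1) :=
      pre_mono _ _ (Nat.le_succ _)
    have hd : pre keyU (fun u' => m₁ u' l) (keyU u + 1) ≤ γ l * r := by
      calc pre keyU (fun u' => m₁ u' l) (keyU u + 1) ≤ ∑ u' : U, m₁ u' l := pre_le_top _ _ _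
      _ = r * γ l := colsum_m₁ l
      _ = γ l * r := Nat.mul_comm _ _
    have hch := sum_chunks (γ l) r _ _ hc hd
    have hstep := pre_succ keyU keyU_inj (fun u' => m₁ u' l) u
    calc ∑ s : Fin (γ l), m₂ u ⟨l, s⟩
        = ∑ s ∈ Finset.range (γ l), cnt (s * r) ((s + 1) * r)
            (pre keyU (fun u' => m₁ u' l) (keyU u))
            (pre keyU (fun u' => m₁ u' l) (keyU u + 1)) :=
          Fin.sum_univ_eq_sum_range (fun s => cnt (s * r) ((s + 1) * r)
            (pre keyU (fun u' => m₁ u' l) (keyU u))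
            (pre keyU (fun u' => m₁ u' l) (keyU u + 1))) ((γ l))
    _ = pre keyU (fun u' => m₁ u' l) (keyU u + 1) - pre keyU (fun u' => m₁ u' l) (keyU u) := hch
    _ = m₁ u l := by omega
  have sum_m₂_left : ∀ v : V, ∑ u : U, m₂ u v = r := by
    intro v
    have h := sum_key_cnt keyU keyU_inj (fun u => m₁ u v.1) (a * R) keyU_lt
      (↑v.2 * r) ((↑v.2 + 1) * r) (by nlinarith) (by
        rw [colsum_m₁ v.1]
        have : (↑v.2 + 1) ≤ γ v.1 := v.2.isLt
        calc (↑v.2 + 1) * r ≤ γ v.1 * r := Nat.mul_le_mul_right r this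
        _ = r * γ v.1 := Nat.mul_comm _ _)
    have hsub : (↑v.2 + 1) * r - ↑v.2 * r = r := by rw [Nat.add_mul]; omega
    calc ∑ u : U, m₂ u v = (↑v.2 + 1) * r - ↑v.2 * r := h
    _ = r := hsub
  have deg_left : ∀ u : U, ∑ v : V, m₂ u v = r := by
    intro u
    rw [← Finset.univ_sigma_univ, Finset.sum_sigma]
    calc ∑ l, ∑ s : Fin (γ l), m₂ u ⟨l, s⟩ = ∑ l, m₁ u l :=
          Finset.sum_congr rfl (fun l _ => sum_m₂_right u l)
    _ = r := sum_m₁_row u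
  -- Hall
  set tset : U → Finset V := fun u => Finset.univ.filter (fun v => 1 ≤ m₂ u v) with htset
  have hall : ∀ s : Finset U, s.card ≤ (s.biUnion tset).card := by
    intro s
    have h1 : r * s.card = ∑ u ∈ s, ∑ v : V, m₂ u v := by
      rw [Finset.sum_congr rfl (fun u _ => deg_left u), Finset.sum_const, smul_eq_mul,
        Nat.mul_comm]
    have h2 : ∑ u ∈ s, ∑ v : V, m₂ u v = ∑ v : V, ∑ u ∈ s, m₂ u v := Finset.sum_comm
    have h3 : ∑ v : V, ∑ u ∈ s, m₂ u v = ∑ v ∈ s.biUnion tset, ∑ u ∈ s, m₂ u v := by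
      symm
      apply Finset.sum_subset (Finset.subset_univ _)
      intro v _ hv
      apply Finset.sum_eq_zero
      intro u hu
      by_contra hne
      have : v ∈ tset u := by
        rw [htset]
        simp only [Finset.mem_filter, Finset.mem_univ, true_and]
        omega
      exact hv (Finset.mem_biUnion.mpr ⟨u, hu, this⟩)
    have h4 : ∑ v ∈ s.biUnion tset, ∑ u ∈ s, m₂ u v ≤ (s.biUnion tset).card * r := by
      calc ∑ v ∈ s.biUnion tset, ∑ u ∈ s, m₂ u v ≤ ∑ _v ∈ s.biUnion tset, r := by
            apply Finset.sum_le_sum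
            intro v _
            calc ∑ u ∈ s, m₂ u v ≤ ∑ u : U, m₂ u v :=
                  Finset.sum_le_sum_of_subset (Finset.subset_univ s)
            _ = r := sum_m₂_left v
      _ = (s.biUnion tset).card * r := by rw [Finset.sum_const, smul_eq_mul]
    have h5 : r * s.card ≤ r * (s.biUnion tset).card := by
      rw [h1, h2, h3]
      calc ∑ v ∈ s.biUnion tset, ∑ u ∈ s, m₂ u v ≤ (s.biUnion tset).card * r := h4
      _ = r * (s.biUnion tset).card := Nat.mul_comm _ _
    exact Nat.le_of_mul_le_mul_left h5 (by omega)
  obtain ⟨f, finj, hf⟩ := (Finset.all_card_le_biUnion_card_iff_exists_injective tset).mp hall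
  have cardUV : Fintype.card U = Fintype.card V := by
    have hU' : Fintype.card U = ∑ j, ρ j := by
      show Fintype.card ((j : Fin a) × Fin (ρ j)) = _
      rw [Fintype.card_sigma]; simp
    have hV' : Fintype.card V = ∑ l, γ l := by
      show Fintype.card ((l : Fin b) × Fin (γ l)) = _
      rw [Fintype.card_sigma]; simp
    have : r * ∑ j, ρ j = r * ∑ l, γ l := by
      rw [Finset.mul_sum, Finset.mul_sum]
      rw [Finset.sum_congr rfl (fun j (_ : j ∈ Finset.univ) => (hrow j).symm),
        Finset.sum_congr rfl (fun l (_ : l ∈ Finset.univ) => (hcol l).symm)]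
      exact Finset.sum_comm
    rw [hU', hV']
    exact Nat.eq_of_mul_eq_mul_left (by omega) this
  have fbij : Function.Bijective f :=
    (Fintype.bijective_iff_injective_and_card f).mpr ⟨finj, cardUV⟩
  have hfm : ∀ u, 1 ≤ m₂ u (f u) := by
    intro u
    have := hf u
    rw [htset] at this
    simpa using this
  -- define N
  refine ⟨fun j l => (Finset.univ.filter fun u : U => u.1 = j ∧ (f u).1 = l).card, ?_, ?_, ?_⟩
  · -- capacity
    intro j l
    show (Finset.univ.filter fun u : U => u.1 = j ∧ (f u).1 = l).card ≤ A j l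
    rw [Finset.card_eq_sum_ones]
    calc ∑ u ∈ Finset.univ.filter (fun u : U => u.1 = j ∧ (f u).1 = l), 1
        ≤ ∑ u ∈ Finset.univ.filter (fun u : U => u.1 = j ∧ (f u).1 = l), m₁ u l := by
          apply Finset.sum_le_sum
          intro u hu
          rw [Finset.mem_filter] at hu
          have h1 : m₂ u (f u) ≤ m₁ u (f u).1 := by
            have := sum_m₂_right u (f u).1
            have hterm : m₂ u ⟨(f u).1, (f u).2⟩ ≤ ∑ s : Fin (γ (f u).1), m₂ u ⟨(f u).1, s⟩ :=
              Finset.single_le_sum (f := fun s : Fin (γ (f u).1) => m₂ u ⟨(f u).1, s⟩)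
                (fun s _ => Nat.zero_le _) (Finset.mem_univ (f u).2)
            rw [this] at hterm
            exact hterm
          rw [hu.2.2] at h1
          exact le_trans (hfm u) h1
      _ ≤ ∑ u ∈ Finset.univ.filter (fun u : U => u.1 = j), m₁ u l := by
          apply Finset.sum_le_sum_of_subset
          intro u hu
          rw [Finset.mem_filter] at hu ⊢
          exact ⟨hu.1, hu.2.1⟩
      _ = ∑ t : Fin (ρ j), m₁ ⟨j, t⟩ l := sum_fiber (fun u => m₁ u l) j
      _ = A j l := sum_m₁_col j l
  · -- row sums
    intro j
    show ∑ l, (Finset.univ.filter fun u : U => u.1 = j ∧ (f u).1 = l).card = ρ j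
    have : ∀ l, (Finset.univ.filter fun u : U => u.1 = j ∧ (f u).1 = l).card
        = ∑ u : U, if u.1 = j ∧ (f u).1 = l then 1 else 0 := by
      intro l
      rw [Finset.card_filter]
    rw [Finset.sum_congr rfl (fun l _ => this l), Finset.sum_comm]
    have inner : ∀ u : U, (∑ l, if u.1 = j ∧ (f u).1 = l then 1 else 0)
        = if u.1 = j then 1 else 0 := by
      intro u
      by_cases h : u.1 = j
      · simp only [h, true_and]
        rw [Finset.sum_ite_eq Finset.univ (f u).1 (fun _ => 1)]
        simp
      · simp [h]
    rw [Finset.sum_congr rfl (fun u _ => inner u)]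
    calc ∑ u : U, (if u.1 = j then 1 else 0)
        = ∑ u ∈ Finset.univ.filter (fun u : U => u.1 = j), 1 := (Finset.sum_filter _ _).symm
    _ = ∑ _t : Fin (ρ j), (1 : ℕ) := sum_fiber (fun _ => 1) j
    _ = ρ j := by simp
  · -- column sums
    intro l
    show ∑ j, (Finset.univ.filter fun u : U => u.1 = j ∧ (f u).1 = l).card = γ l
    have : ∀ j, (Finset.univ.filter fun u : U => u.1 = j ∧ (f u).1 = l).card
        = ∑ u : U, if u.1 = j ∧ (f u).1 = l then 1 else 0 := by
      intro j
      rw [Finset.card_filter]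
    rw [Finset.sum_congr rfl (fun j _ => this j), Finset.sum_comm]
    have inner : ∀ u : U, (∑ j, if u.1 = j ∧ (f u).1 = l then 1 else 0)
        = if (f u).1 = l then 1 else 0 := by
      intro u
      by_cases h : (f u).1 = l
      · simp only [h, and_true]
        rw [Finset.sum_ite_eq Finset.univ u.1 (fun _ => 1)]
        simp
      · simp [h]
    rw [Finset.sum_congr rfl (fun u _ => inner u)]
    calc ∑ u : U, (if (f u).1 = l then 1 else 0)
        = ∑ v : V, (if v.1 = l then 1 else 0) := fbij.sum_comp (fun v : V => if v.1 = l then 1 else 0)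
    _ = ∑ v ∈ Finset.univ.filter (fun v : V => v.1 = l), 1 := (Finset.sum_filter _ _).symm
    _ = ∑ _s : Fin (γ l), (1 : ℕ) := sum_fiber (fun _ => 1) l
    _ = γ l := by simp

end Transport



def genQuot {n k₁ k₂ k₃ : ℕ} (L : Fin n × Fin n × Fin n → ℕ) (c₁ : Fin n → Fin k₁)
    (c₂ : Fin n → Fin k₂) (c₃ : Fin n → Fin k₃) (i : Fin k₁) (j : Fin k₂) (l : Fin k₃) : ℕ :=
  ∑ p : Fin n × Fin n × Fin n,
    if c₁ p.1 = i ∧ c₂ p.2.1 = j ∧ c₃ p.2.2 = l then L p else 0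

def Good (n k₁ k₂ k₃ : ℕ) (r₁ : Fin k₁ → ℕ) (r₂ : Fin k₂ → ℕ) (r₃ : Fin k₃ → ℕ)
    (M : Fin k₁ × Fin k₂ × Fin k₃ → ℕ) : Prop :=
  ∃ (c₁ : Fin n → Fin k₁) (c₂ : Fin n → Fin k₂) (c₃ : Fin n → Fin k₃)
    (L : Fin n × Fin n × Fin n → ℕ),
    (∀ i, blockCard c₁ i = r₁ i) ∧ (∀ i, blockCard c₂ i = r₂ i) ∧
    (∀ i, blockCard c₃ i = r₃ i) ∧
    (∀ p, L p = 0 ∨ L p = 1) ∧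
    (∀ a b, ∑ x, L (x, a, b) = 1) ∧
    (∀ a b, ∑ x, L (a, x, b) = 1) ∧
    (∀ a b, ∑ x, L (a, b, x) = 1) ∧
    (∀ i j l, M (i, j, l) = genQuot L c₁ c₂ c₃ i j l)

/-- cyclic shift on triples -/
def cyc (α : Type*) : (α × α × α) ≃ (α × α × α) where
  toFun p := (p.2.1, p.2.2, p.1)
  invFun q := (q.2.2, q.1, q.2.1)
  left_inv p := rfl
  right_inv q := rfl

lemma good_shift {n k₁ k₂ k₃ : ℕ} {r₁ : Fin k₁ → ℕ} {r₂ : Fin k₂ → ℕ} {r₃ : Fin k₃ → ℕ}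
    {M : Fin k₁ × Fin k₂ × Fin k₃ → ℕ}
    (h : Good n k₂ k₃ k₁ r₂ r₃ r₁ (fun p => M (p.2.2, p.1, p.2.1))) :
    Good n k₁ k₂ k₃ r₁ r₂ r₃ M := by
  obtain ⟨c₁', c₂', c₃', L', hb₁, hb₂, hb₃, h01, hL1, hL2, hL3, hq⟩ := h
  refine ⟨c₃', c₁', c₂', fun p => L' (p.2.1, p.2.2, p.1), hb₃, hb₁, hb₂,
    fun p => h01 _, fun a b => hL3 a b, fun a b => hL1 b a, fun a b => hL2 b a, ?_⟩
  intro i j l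
  have hqv := hq j l i
  simp only at hqv
  rw [hqv]
  unfold genQuot
  refine Fintype.sum_equiv (cyc (Fin n)).symm _ _ (fun p => ?_)
  show (if c₁' p.1 = j ∧ c₂' p.2.1 = l ∧ c₃' p.2.2 = i then L' p else 0)
    = (if c₃' p.2.2 = i ∧ c₁' p.1 = j ∧ c₂' p.2.1 = l
        then L' (p.1, p.2.1, p.2.2) else 0)
  exact if_congr (by tauto) rfl rfl

lemma genQuot_comp_left {n k k' : ℕ} (L : Fin n × Fin n × Fin n → ℕ)
    {k₂ k₃ : ℕ} (c₁ : Fin n → Fin k') (c₂ : Fin n → Fin k₂) (c₃ : Fin n → Fin k₃)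
    (m : Fin k' → Fin k) (i : Fin k) (j : Fin k₂) (l : Fin k₃) :
    genQuot L (m ∘ c₁) c₂ c₃ i j l = ∑ y, if m y = i then genQuot L c₁ c₂ c₃ y j l else 0 := by
  unfold genQuot
  symm
  have push : ∀ y : Fin k', (if m y = i then
      (∑ p : Fin n × Fin n × Fin n, if c₁ p.1 = y ∧ c₂ p.2.1 = j ∧ c₃ p.2.2 = l then L p else 0)
      else 0)
      = ∑ p : Fin n × Fin n × Fin n, if m y = i then
          (if c₁ p.1 = y ∧ c₂ p.2.1 = j ∧ c₃ p.2.2 = l then L p else 0) else 0 := by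
    intro y
    by_cases h : m y = i <;> simp [h]
  rw [Finset.sum_congr rfl (fun y _ => push y), Finset.sum_comm]
  refine Finset.sum_congr rfl (fun p _ => ?_)
  have key : ∀ y : Fin k', (if m y = i then
      (if c₁ p.1 = y ∧ c₂ p.2.1 = j ∧ c₃ p.2.2 = l then L p else 0) else 0)
      = if y = c₁ p.1 then
          (if m (c₁ p.1) = i ∧ c₂ p.2.1 = j ∧ c₃ p.2.2 = l then L p else 0) else 0 := by
    intro y
    by_cases hy : y = c₁ p.1
    · subst hy
      by_cases h1 : m (c₁ p.1) = i <;> simp [h1]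
    · rw [if_neg hy]
      by_cases h1 : m y = i
      · rw [if_pos h1, if_neg (fun hc => hy hc.1.symm)]
      · rw [if_neg h1]
  rw [Finset.sum_congr rfl (fun y _ => key y)]
  rw [Finset.sum_ite_eq' Finset.univ (c₁ p.1)]
  simp only [Finset.mem_univ, if_true]
  exact if_congr (by simp [Function.comp]) rfl rfl

lemma blockCard_comp {n k k' : ℕ} (c : Fin n → Fin k') (m : Fin k' → Fin k) (i : Fin k) :
    blockCard (m ∘ c) i = ∑ y, if m y = i then blockCard c y else 0 := by
  unfold blockCard
  have : ∀ y : Fin k', (if m y = i then (Finset.univ.filter fun x => c x = y).card else 0)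
      = ∑ x : Fin n, if m y = i then (if c x = y then 1 else 0) else 0 := by
    intro y
    by_cases h : m y = i
    · simp only [h, if_true]
      rw [Finset.card_filter]
    · simp [h]
  rw [Finset.sum_congr rfl (fun y _ => this y), Finset.sum_comm, Finset.card_filter]
  refine Finset.sum_congr rfl (fun x _ => ?_)
  have key : ∀ y : Fin k', (if m y = i then (if c x = y then 1 else 0) else 0)
      = if y = c x then (if m (c x) = i then 1 else 0) else 0 := by
    intro y
    by_cases hy : y = c x
    · subst hy; simp
    · rw [if_neg hy]
      by_cases h1 : m y = i
      · rw [if_pos h1, if_neg (fun hc => hy hc.symm)]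
      · rw [if_neg h1]
  rw [Finset.sum_congr rfl (fun y _ => key y)]
  rw [Finset.sum_ite_eq' Finset.univ (c x)]
  simp [Function.comp]


end Hilton

namespace Hilton

lemma detach {n k₁ k₂ k₃ : ℕ} {r₁ : Fin k₁ → ℕ} {r₂ : Fin k₂ → ℕ} {r₃ : Fin k₃ → ℕ}
    {M : Fin k₁ × Fin k₂ × Fin k₃ → ℕ}
    (hr₁ : ∀ i, 0 < r₁ i)
    (hl1 : ∀ j l, ∑ x, M (x, j, l) = r₂ j * r₃ l)
    (hl2 : ∀ i l, ∑ x, M (i, x, l) = r₁ i * r₃ l)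
    (hl3 : ∀ i j, ∑ x, M (i, j, x) = r₁ i * r₂ j)
    (i₀ : Fin k₁) (h2 : 2 ≤ r₁ i₀)
    (ih : ∀ (r₁' : Fin (k₁ + 1) → ℕ) (M' : Fin (k₁ + 1) × Fin k₂ × Fin k₃ → ℕ),
      (∀ i, 0 < r₁' i) → (∑ i, r₁' i = ∑ i, r₁ i) →
      (∀ j l, ∑ x, M' (x, j, l) = r₂ j * r₃ l) →
      (∀ i l, ∑ x, M' (i, x, l) = r₁' i * r₃ l) →
      (∀ i j, ∑ x, M' (i, j, x) = r₁' i * r₂ j) →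
      Good n (k₁ + 1) k₂ k₃ r₁' r₂ r₃ M') :
    Good n k₁ k₂ k₃ r₁ r₂ r₃ M := by
  classical
  -- transportation step
  obtain ⟨N, hNle, hNrow, hNcol⟩ := exists_sub_matrix
    (fun (j : Fin k₂) (l : Fin k₃) => M (i₀, j, l)) r₂ r₃
    (le_trans (by omega) h2)
    (fun j => hl3 i₀ j) (fun l => hl2 i₀ l)
  -- new class sizes and matrix
  set r₁' : Fin (k₁ + 1) → ℕ :=
    fun x => Fin.lastCases 1 (fun i => if i = i₀ then r₁ i₀ - 1 else r₁ i) x with hr₁'def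
  set M' : Fin (k₁ + 1) × Fin k₂ × Fin k₃ → ℕ :=
    fun p => Fin.lastCases (N p.2.1 p.2.2)
      (fun i => if i = i₀ then M (i₀, p.2.1, p.2.2) - N p.2.1 p.2.2
        else M (i, p.2.1, p.2.2)) p.1 with hM'def
  have hr₁'last : r₁' (Fin.last k₁) = 1 := by simp [hr₁'def]
  have hr₁'cast : ∀ i : Fin k₁, r₁' i.castSucc = if i = i₀ then r₁ i₀ - 1 else r₁ i := by
    intro i; simp [hr₁'def]
  have hM'last : ∀ j l, M' (Fin.last k₁, j, l) = N j l := by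
    intro j l; simp [hM'def]
  have hM'cast : ∀ (i : Fin k₁) j l, M' (i.castSucc, j, l)
      = if i = i₀ then M (i₀, j, l) - N j l else M (i, j, l) := by
    intro i j l; simp [hM'def]
  -- positivity
  have hpos' : ∀ i, 0 < r₁' i := by
    intro i
    refine Fin.lastCases ?_ ?_ i
    · rw [hr₁'last]; omega
    · intro i'
      rw [hr₁'cast]
      split_ifs with h
      · omega
      · exact hr₁ i'
  -- sum preserved
  have hsum' : ∑ i, r₁' i = ∑ i, r₁ i := by
    rw [Fin.sum_univ_castSucc]
    rw [Finset.sum_congr rfl (fun i (_ : i ∈ Finset.univ) => hr₁'cast i), hr₁'last]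
    have hpt : ∀ i : Fin k₁, r₁ i
        = (if i = i₀ then r₁ i₀ - 1 else r₁ i) + (if i = i₀ then 1 else 0) := by
      intro i
      split_ifs with h
      · rw [h]; omega
      · omega
    calc (∑ i, if i = i₀ then r₁ i₀ - 1 else r₁ i) + 1
        = (∑ i, if i = i₀ then r₁ i₀ - 1 else r₁ i) + ∑ i, (if i = i₀ then (1:ℕ) else 0) := by
          rw [Finset.sum_ite_eq' Finset.univ i₀ (fun _ => (1:ℕ))]
          simp
    _ = ∑ i, ((if i = i₀ then r₁ i₀ - 1 else r₁ i) + (if i = i₀ then 1 else 0)) := by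
          rw [Finset.sum_add_distrib]
    _ = ∑ i, r₁ i := Finset.sum_congr rfl (fun i _ => (hpt i).symm)
  -- line sums
  have hl1' : ∀ j l, ∑ x, M' (x, j, l) = r₂ j * r₃ l := by
    intro j l
    rw [Fin.sum_univ_castSucc]
    rw [Finset.sum_congr rfl (fun i (_ : i ∈ Finset.univ) => hM'cast i j l), hM'last]
    have hNM : N j l ≤ M (i₀, j, l) := hNle j l
    have hpt : ∀ i : Fin k₁, M (i, j, l)
        = (if i = i₀ then M (i₀, j, l) - N j l else M (i, j, l))
          + (if i = i₀ then N j l else 0) := by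
      intro i
      split_ifs with h
      · rw [h]; omega
      · omega
    have : ∑ i, M (i, j, l)
        = (∑ i, if i = i₀ then M (i₀, j, l) - N j l else M (i, j, l)) + N j l := by
      calc ∑ i, M (i, j, l)
          = ∑ i, ((if i = i₀ then M (i₀, j, l) - N j l else M (i, j, l))
            + (if i = i₀ then N j l else 0)) := Finset.sum_congr rfl (fun i _ => hpt i)
      _ = (∑ i, if i = i₀ then M (i₀, j, l) - N j l else M (i, j, l))
            + ∑ i, (if i = i₀ then N j l else 0) := Finset.sum_add_distrib
      _ = (∑ i, if i = i₀ then M (i₀, j, l) - N j l else M (i, j, l)) + N j l := by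
            rw [Finset.sum_ite_eq' Finset.univ i₀ (fun _ => N j l)]
            simp
    rw [← this]
    exact hl1 j l
  have hl2' : ∀ i l, ∑ x, M' (i, x, l) = r₁' i * r₃ l := by
    intro i l
    refine Fin.lastCases ?_ ?_ i
    · rw [hr₁'last, one_mul]
      calc ∑ x, M' (Fin.last k₁, x, l) = ∑ x, N x l :=
            Finset.sum_congr rfl (fun x _ => hM'last x l)
      _ = r₃ l := hNcol l
    · intro i'
      rw [hr₁'cast]
      by_cases h : i' = i₀
      · subst h
        rw [if_pos rfl]
        have heach : ∀ x, M' (i'.castSucc, x, l) = M (i', x, l) - N x l := by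
          intro x
          rw [hM'cast]
          simp
        rw [Finset.sum_congr rfl (fun x (_ : x ∈ Finset.univ) => heach x)]
        have hsub : ∀ x, N x l ≤ M (i', x, l) := fun x => hNle x l
        have hadd : (∑ x, (M (i', x, l) - N x l)) + ∑ x, N x l = ∑ x, M (i', x, l) := by
          rw [← Finset.sum_add_distrib]
          exact Finset.sum_congr rfl (fun x _ => by have := hsub x; omega)
        rw [hNcol l] at hadd
        rw [hl2 i' l] at hadd
        rw [Nat.sub_one_mul]
        omega
      · have heach : ∀ x, M' (i'.castSucc, x, l) = M (i', x, l) := by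
          intro x
          rw [hM'cast]
          simp [h]
        rw [Finset.sum_congr rfl (fun x (_ : x ∈ Finset.univ) => heach x), if_neg h]
        exact hl2 i' l
  have hl3' : ∀ i j, ∑ x, M' (i, j, x) = r₁' i * r₂ j := by
    intro i j
    refine Fin.lastCases ?_ ?_ i
    · rw [hr₁'last, one_mul]
      calc ∑ x, M' (Fin.last k₁, j, x) = ∑ x, N j x :=
            Finset.sum_congr rfl (fun x _ => hM'last j x)
      _ = r₂ j := hNrow j
    · intro i'
      rw [hr₁'cast]
      by_cases h : i' = i₀
      · subst h
        rw [if_pos rfl]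
        have heach : ∀ x, M' (i'.castSucc, j, x) = M (i', j, x) - N j x := by
          intro x
          rw [hM'cast]
          simp
        rw [Finset.sum_congr rfl (fun x (_ : x ∈ Finset.univ) => heach x)]
        have hsub : ∀ x, N j x ≤ M (i', j, x) := fun x => hNle j x
        have hadd : (∑ x, (M (i', j, x) - N j x)) + ∑ x, N j x = ∑ x, M (i', j, x) := by
          rw [← Finset.sum_add_distrib]
          exact Finset.sum_congr rfl (fun x _ => by have := hsub x; omega)
        rw [hNrow j] at hadd
        rw [hl3 i' j] at hadd
        rw [Nat.sub_one_mul]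
        omega
      · have heach : ∀ x, M' (i'.castSucc, j, x) = M (i', j, x) := by
          intro x
          rw [hM'cast]
          simp [h]
        rw [Finset.sum_congr rfl (fun x (_ : x ∈ Finset.univ) => heach x), if_neg h]
        exact hl3 i' j
  -- apply the inductive hypothesis
  obtain ⟨c₁', c₂, c₃, L, hb₁, hb₂, hb₃, h01, hL1, hL2, hL3, hq⟩ :=
    ih r₁' M' hpos' hsum' hl1' hl2' hl3'
  -- merge map
  set mrg : Fin (k₁ + 1) → Fin k₁ := fun x => Fin.lastCases i₀ (fun i => i) x with hmrg
  have hmrg_last : mrg (Fin.last k₁) = i₀ := by simp [hmrg]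
  have hmrg_cast : ∀ i : Fin k₁, mrg i.castSucc = i := by intro i; simp [hmrg]
  refine ⟨mrg ∘ c₁', c₂, c₃, L, ?_, hb₂, hb₃, h01, hL1, hL2, hL3, ?_⟩
  · -- block cards
    intro i
    rw [blockCard_comp]
    rw [Fin.sum_univ_castSucc]
    have hcongr : ∀ i' : Fin k₁, (if mrg i'.castSucc = i then blockCard c₁' i'.castSucc else 0)
        = if i' = i then blockCard c₁' i'.castSucc else 0 := by
      intro i'; rw [hmrg_cast]
    rw [Finset.sum_congr rfl (fun i' (_ : i' ∈ Finset.univ) => hcongr i'), hmrg_last]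
    rw [Finset.sum_ite_eq' Finset.univ i (fun i' => blockCard c₁' i'.castSucc)]
    simp only [Finset.mem_univ, if_true]
    rw [hb₁, hr₁'cast]
    by_cases h : i = i₀
    · subst h
      rw [if_pos rfl, if_pos rfl, hb₁, hr₁'last]
      omega
    · rw [if_neg h, if_neg (fun hh => h hh.symm)]
      omega
  · -- quotient
    intro i j l
    rw [genQuot_comp_left]
    rw [Fin.sum_univ_castSucc]
    have hcongr : ∀ i' : Fin k₁,
        (if mrg i'.castSucc = i then genQuot L c₁' c₂ c₃ i'.castSucc j l else 0)
        = if i' = i then genQuot L c₁' c₂ c₃ i'.castSucc j l else 0 := by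
      intro i'; rw [hmrg_cast]
    rw [Finset.sum_congr rfl (fun i' (_ : i' ∈ Finset.univ) => hcongr i'), hmrg_last]
    rw [Finset.sum_ite_eq' Finset.univ i (fun i' => genQuot L c₁' c₂ c₃ i'.castSucc j l)]
    simp only [Finset.mem_univ, if_true]
    rw [← hq i.castSucc j l, ← hq (Fin.last k₁) j l]
    rw [hM'cast, hM'last]
    by_cases h : i = i₀
    · subst h
      rw [if_pos rfl, if_pos rfl]
      have := hNle j l
      omega
    · rw [if_neg h, if_neg (fun hh => h hh.symm)]
      omega

lemma all_one {k : ℕ} {r : Fin k → ℕ} (hr : ∀ i, 0 < r i) (hs : ∑ i, r i = k) :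
    ∀ i, r i = 1 := by
  intro i
  by_contra h
  have h2 : 2 ≤ r i := by have := hr i; omega
  have : ∑ _j : Fin k, 1 < ∑ j, r j :=
    Finset.sum_lt_sum (fun j _ => hr j) ⟨i, Finset.mem_univ i, h2⟩
  simp only [Finset.sum_const, Finset.card_univ, Fintype.card_fin, smul_eq_mul, mul_one] at this
  omega

lemma base {k : ℕ} {r₁ r₂ r₃ : Fin k → ℕ} {M : Fin k × Fin k × Fin k → ℕ}
    (h₁ : ∀ i, r₁ i = 1) (h₂ : ∀ i, r₂ i = 1) (h₃ : ∀ i, r₃ i = 1)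
    (hl1 : ∀ j l, ∑ x, M (x, j, l) = r₂ j * r₃ l)
    (hl2 : ∀ i l, ∑ x, M (i, x, l) = r₁ i * r₃ l)
    (hl3 : ∀ i j, ∑ x, M (i, j, x) = r₁ i * r₂ j) :
    Good k k k k r₁ r₂ r₃ M := by
  classical
  have hbc : ∀ i : Fin k, blockCard (id : Fin k → Fin k) i = 1 := by
    intro i
    unfold blockCard
    show (Finset.univ.filter fun x : Fin k => x = i).card = 1
    rw [Finset.filter_eq' Finset.univ i]
    simp
  have hl1' : ∀ j l, ∑ x, M (x, j, l) = 1 := by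
    intro j l; rw [hl1, h₂, h₃]
  have hl2' : ∀ i l, ∑ x, M (i, x, l) = 1 := by
    intro i l; rw [hl2, h₁, h₃]
  have hl3' : ∀ i j, ∑ x, M (i, j, x) = 1 := by
    intro i j; rw [hl3, h₁, h₂]
  refine ⟨id, id, id, M, fun i => by rw [hbc, h₁], fun i => by rw [hbc, h₂],
    fun i => by rw [hbc, h₃], ?_, hl1', hl2', hl3', ?_⟩
  · intro p
    have hle : M p ≤ ∑ x, M (p.1, p.2.1, x) :=
      Finset.single_le_sum (f := fun x => M (p.1, p.2.1, x))
        (fun x _ => Nat.zero_le _) (Finset.mem_univ p.2.2)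
    rw [hl3' p.1 p.2.1] at hle
    omega
  · intro i j l
    unfold genQuot
    have key : ∀ p : Fin k × Fin k × Fin k,
        (if (id p.1 : Fin k) = i ∧ (id p.2.1 : Fin k) = j ∧ (id p.2.2 : Fin k) = l
          then M p else 0)
        = if p = (i, j, l) then M p else 0 := by
      intro p
      refine if_congr ?_ rfl rfl
      simp only [id_eq, Prod.ext_iff]
    rw [Finset.sum_congr rfl (fun p _ => key p)]
    rw [Finset.sum_ite_eq' Finset.univ (i, j, l) M]
    simp

theorem gen : ∀ (μ n k₁ k₂ k₃ : ℕ) (r₁ : Fin k₁ → ℕ) (r₂ : Fin k₂ → ℕ) (r₃ : Fin k₃ → ℕ)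
    (M : Fin k₁ × Fin k₂ × Fin k₃ → ℕ),
    (∀ i, 0 < r₁ i) → (∀ i, 0 < r₂ i) → (∀ i, 0 < r₃ i) →
    (∑ i, r₁ i = n) → (∑ i, r₂ i = n) → (∑ i, r₃ i = n) →
    (∀ j l, ∑ x, M (x, j, l) = r₂ j * r₃ l) →
    (∀ i l, ∑ x, M (i, x, l) = r₁ i * r₃ l) →
    (∀ i j, ∑ x, M (i, j, x) = r₁ i * r₂ j) →
    3 * n = μ + (k₁ + k₂ + k₃) → Good n k₁ k₂ k₃ r₁ r₂ r₃ M := by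
  intro μ
  induction μ with
  | zero =>
    intro n k₁ k₂ k₃ r₁ r₂ r₃ M hr₁ hr₂ hr₃ hs₁ hs₂ hs₃ hl1 hl2 hl3 hμ
    have hk₁ : k₁ ≤ n := by
      have : (k₁ : ℕ) = ∑ _i : Fin k₁, 1 := by simp
      rw [this, ← hs₁]
      exact Finset.sum_le_sum (fun i _ => hr₁ i)
    have hk₂ : k₂ ≤ n := by
      have : (k₂ : ℕ) = ∑ _i : Fin k₂, 1 := by simp
      rw [this, ← hs₂]
      exact Finset.sum_le_sum (fun i _ => hr₂ i)
    have hk₃ : k₃ ≤ n := by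
      have : (k₃ : ℕ) = ∑ _i : Fin k₃, 1 := by simp
      rw [this, ← hs₃]
      exact Finset.sum_le_sum (fun i _ => hr₃ i)
    have e₁ : k₁ = n := by omega
    subst e₁
    have e₂ : k₂ = k₁ := by omega
    subst e₂
    have e₃ : k₃ = k₂ := by omega
    subst e₃
    exact base (all_one hr₁ hs₁) (all_one hr₂ hs₂) (all_one hr₃ hs₃) hl1 hl2 hl3
  | succ μ ih =>
    intro n k₁ k₂ k₃ r₁ r₂ r₃ M hr₁ hr₂ hr₃ hs₁ hs₂ hs₃ hl1 hl2 hl3 hμ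
    by_cases hc₁ : ∃ i, 2 ≤ r₁ i
    · obtain ⟨i₀, hi₀⟩ := hc₁
      refine detach hr₁ hl1 hl2 hl3 i₀ hi₀ ?_
      intro r₁' M' hpos hsum hl1' hl2' hl3'
      exact ih n (k₁ + 1) k₂ k₃ r₁' r₂ r₃ M' hpos hr₂ hr₃ (by omega) hs₂ hs₃
        hl1' hl2' hl3' (by omega)
    · have ha₁ : ∀ i, r₁ i = 1 := by
        intro i
        push_neg at hc₁
        have := hc₁ i
        have := hr₁ i
        omega
      by_cases hc₂ : ∃ i, 2 ≤ r₂ i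
      · obtain ⟨i₀, hi₀⟩ := hc₂
        apply good_shift
        refine detach hr₂ (fun j l => ?_) (fun i l => ?_) (fun i j => ?_) i₀ hi₀ ?_
        · show ∑ x : Fin k₂, M (l, x, j) = r₃ j * r₁ l
          rw [hl2 l j, Nat.mul_comm]
        · show ∑ x : Fin k₃, M (l, i, x) = r₂ i * r₁ l
          rw [hl3 l i, Nat.mul_comm]
        · show ∑ x : Fin k₁, M (x, i, j) = r₂ i * r₃ j
          exact hl1 i j
        · intro r₂' M' hpos hsum hl1' hl2' hl3'
          exact ih n (k₂ + 1) k₃ k₁ r₂' r₃ r₁ M' hpos hr₃ hr₁ (by omega) hs₃ hs₁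
            hl1' hl2' hl3' (by omega)
      · have ha₂ : ∀ i, r₂ i = 1 := by
          intro i
          push_neg at hc₂
          have := hc₂ i
          have := hr₂ i
          omega
        by_cases hc₃ : ∃ i, 2 ≤ r₃ i
        · obtain ⟨i₀, hi₀⟩ := hc₃
          apply good_shift
          apply good_shift
          refine detach hr₃ (fun j l => ?_) (fun i l => ?_) (fun i j => ?_) i₀ hi₀ ?_
          · show ∑ x : Fin k₃, M (j, l, x) = r₁ j * r₂ l
            exact hl3 j l
          · show ∑ x : Fin k₁, M (x, l, i) = r₃ i * r₂ l
            rw [hl1 l i, Nat.mul_comm]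
          · show ∑ x : Fin k₂, M (j, x, i) = r₃ i * r₁ j
            rw [hl2 j i, Nat.mul_comm]
          · intro r₃' M' hpos hsum hl1' hl2' hl3'
            exact ih n (k₃ + 1) k₁ k₂ r₃' r₁ r₂ M' hpos hr₁ hr₂ (by omega) hs₁ hs₂
              hl1' hl2' hl3' (by omega)
        · have ha₃ : ∀ i, r₃ i = 1 := by
            intro i
            push_neg at hc₃
            have := hc₃ i
            have := hr₃ i
            omega
          exfalso
          have t₁ : ∑ i, r₁ i = k₁ := by
            rw [Finset.sum_congr rfl (fun i (_ : i ∈ Finset.univ) => ha₁ i)]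
            simp
          have t₂ : ∑ i, r₂ i = k₂ := by
            rw [Finset.sum_congr rfl (fun i (_ : i ∈ Finset.univ) => ha₂ i)]
            simp
          have t₃ : ∑ i, r₃ i = k₃ := by
            rw [Finset.sum_congr rfl (fun i (_ : i ∈ Finset.univ) => ha₃ i)]
            simp
          omega

lemma exists_reindex {n k : ℕ} (c c' : Fin n → Fin k)
    (h : ∀ i, blockCard c i = blockCard c' i) :
    ∃ e : Fin n ≃ Fin n, ∀ x, c' (e x) = c x := by
  classical
  have hcard : ∀ i, Fintype.card {x // c x = i} = Fintype.card {x // c' x = i} := by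
    intro i
    rw [Fintype.card_subtype, Fintype.card_subtype]
    exact h i
  let eI : ∀ i, {x // c x = i} ≃ {x // c' x = i} := fun i => Fintype.equivOfCardEq (hcard i)
  refine ⟨(Equiv.sigmaFiberEquiv c).symm.trans
    ((Equiv.sigmaCongrRight eI).trans (Equiv.sigmaFiberEquiv c')), fun x => ?_⟩
  simp only [Equiv.trans_apply]
  have h1 : (Equiv.sigmaFiberEquiv c).symm x = ⟨c x, ⟨x, rfl⟩⟩ := rfl
  rw [h1]
  have h2 : (Equiv.sigmaCongrRight eI) ⟨c x, ⟨x, rfl⟩⟩ = ⟨c x, eI (c x) ⟨x, rfl⟩⟩ := rfl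
  rw [h2]
  have h3 : (Equiv.sigmaFiberEquiv c') ⟨c x, eI (c x) ⟨x, rfl⟩⟩ = (eI (c x) ⟨x, rfl⟩).val := rfl
  rw [h3]
  exact (eI (c x) ⟨x, rfl⟩).2

end Hilton

theorem stmt_11 (k : ℕ) (M : Fin k × Fin k × Fin k → ℕ) (r : Fin k → ℕ)
    (hr : ∀ i, 0 < r i)
    (hl1 : ∀ i j : Fin k, ∑ x : Fin k, M (x, i, j) = r i * r j)
    (hl2 : ∀ i j : Fin k, ∑ x : Fin k, M (i, x, j) = r i * r j)
    (hl3 : ∀ i j : Fin k, ∑ x : Fin k, M (i, j, x) = r i * r j) :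
    ∃ (c : Fin (∑ i, r i) → Fin k)
      (L : Fin (∑ i, r i) × Fin (∑ i, r i) × Fin (∑ i, r i) → ℕ),
      (∀ i, blockCard c i = r i) ∧
      (∀ p, L p = 0 ∨ L p = 1) ∧
      (∀ a b, ∑ x, L (x, a, b) = 1) ∧
      (∀ a b, ∑ x, L (a, x, b) = 1) ∧
      (∀ a b, ∑ x, L (a, b, x) = 1) ∧
      (∀ i j l : Fin k, M (i, j, l) = tripleQuot L c i j l) := by
  classical
  set n := ∑ i, r i with hn
  have hk : k ≤ n := by
    have h1 : (k : ℕ) = ∑ _i : Fin k, 1 := by simp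
    have h2 : (∑ _i : Fin k, 1) ≤ ∑ i, r i := Finset.sum_le_sum (fun i _ => hr i)
    omega
  obtain ⟨c₁, c₂, c₃, L, hb₁, hb₂, hb₃, h01, hL1, hL2, hL3, hq⟩ :=
    Hilton.gen (3 * n - 3 * k) n k k k r r r M hr hr hr rfl rfl rfl hl1 hl2 hl3 (by omega)
  obtain ⟨e₂, he₂⟩ := Hilton.exists_reindex c₁ c₂ (fun i => by rw [hb₁, hb₂])
  obtain ⟨e₃, he₃⟩ := Hilton.exists_reindex c₁ c₃ (fun i => by rw [hb₁, hb₃])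
  refine ⟨c₁, fun p => L (p.1, e₂ p.2.1, e₃ p.2.2), hb₁, fun p => h01 _, ?_, ?_, ?_, ?_⟩
  · intro a b
    exact hL1 (e₂ a) (e₃ b)
  · intro a b
    calc ∑ x, L (a, e₂ x, e₃ b) = ∑ x, L (a, x, e₃ b) :=
          Equiv.sum_comp e₂ (fun y => L (a, y, e₃ b))
    _ = 1 := hL2 a (e₃ b)
  · intro a b
    calc ∑ x, L (a, e₂ b, e₃ x) = ∑ x, L (a, e₂ b, x) :=
          Equiv.sum_comp e₃ (fun y => L (a, e₂ b, y))
    _ = 1 := hL3 a (e₂ b)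
  · intro i j l
    rw [hq i j l]
    unfold Hilton.genQuot tripleQuot
    refine Fintype.sum_equiv
      (Equiv.prodCongr (Equiv.refl (Fin n)) (Equiv.prodCongr e₂ e₃)).symm _ _ (fun p => ?_)
    show (if c₁ p.1 = i ∧ c₂ p.2.1 = j ∧ c₃ p.2.2 = l then L p else 0)
      = if c₁ p.1 = i ∧ c₁ (e₂.symm p.2.1) = j ∧ c₁ (e₃.symm p.2.2) = l
          then L (p.1, e₂ (e₂.symm p.2.1), e₃ (e₃.symm p.2.2)) else 0
    rw [e₂.apply_symm_apply, e₃.apply_symm_apply]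
    refine if_congr ?_ rfl rfl
    rw [← he₂ (e₂.symm p.2.1), ← he₃ (e₃.symm p.2.2), e₂.apply_symm_apply, e₃.apply_symm_apply]
end

section
/- Let L : Fin n × Fin n × Fin n → ℕ be a partial S-Latin square for S ⊆ Fin n × Fin n, let σ = {P₁,…,P_k} be a partition of Fin n, and let M = ((L ∘₁ σ) ∘₂ σ) ∘₃ σ. Then M(l^t_{ij}) ≤ |P_i|·|P_j| for all t ∈ {1,2,3} and i,j ∈ Fin k, and M(l³_{ij}) = |P_i|·|P_j| whenever P_i × P_j ⊆ S. -/
lemma quotSum1 {n k : ℕ} (L : Fin n × Fin n × Fin n → ℕ) (c : Fin n → Fin k) (i j : Fin k) :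
    ∑ x : Fin k, tripleQuot L c x i j
      = ∑ a : Fin n, ∑ b : Fin n, if c a = i ∧ c b = j then ∑ t, L (t,a,b) else 0 := by
  simp only [tripleQuot]
  rw [Finset.sum_comm]
  simp only [ite_and, Finset.sum_ite_eq, Finset.mem_univ, if_true]
  simp only [Fintype.sum_prod_type]
  rw [Finset.sum_comm]
  refine Finset.sum_congr rfl fun a _ => ?_
  rw [Finset.sum_comm]
  refine Finset.sum_congr rfl fun b _ => ?_
  split_ifs <;> simp

lemma quotSum2 {n k : ℕ} (L : Fin n × Fin n × Fin n → ℕ) (c : Fin n → Fin k) (i j : Fin k) :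
    ∑ x : Fin k, tripleQuot L c i x j
      = ∑ a : Fin n, ∑ b : Fin n, if c a = i ∧ c b = j then ∑ t, L (a,t,b) else 0 := by
  simp only [tripleQuot]
  rw [Finset.sum_comm]
  have key : ∀ p : Fin n × Fin n × Fin n,
      ∑ x : Fin k, (if c p.1 = i ∧ c p.2.1 = x ∧ c p.2.2 = j then L p else 0)
        = if c p.1 = i ∧ c p.2.2 = j then L p else 0 := fun p => by
    rw [Finset.sum_eq_single (c p.2.1)] <;> aesop
  simp only [key]
  simp only [Fintype.sum_prod_type]
  refine Finset.sum_congr rfl fun a _ => ?_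
  rw [Finset.sum_comm]
  refine Finset.sum_congr rfl fun b _ => ?_
  split_ifs <;> simp

lemma quotSum3 {n k : ℕ} (L : Fin n × Fin n × Fin n → ℕ) (c : Fin n → Fin k) (i j : Fin k) :
    ∑ x : Fin k, tripleQuot L c i j x
      = ∑ a : Fin n, ∑ b : Fin n, if c a = i ∧ c b = j then ∑ t, L (a,b,t) else 0 := by
  simp only [tripleQuot]
  rw [Finset.sum_comm]
  have key : ∀ p : Fin n × Fin n × Fin n,
      ∑ x : Fin k, (if c p.1 = i ∧ c p.2.1 = j ∧ c p.2.2 = x then L p else 0)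
        = if c p.1 = i ∧ c p.2.1 = j then L p else 0 := fun p => by
    rw [Finset.sum_eq_single (c p.2.2)] <;> aesop
  simp only [key]
  simp only [Fintype.sum_prod_type]
  refine Finset.sum_congr rfl fun a _ => ?_
  refine Finset.sum_congr rfl fun b _ => ?_
  split_ifs <;> simp

lemma countPairs {n k : ℕ} (c : Fin n → Fin k) (i j : Fin k) :
    ∑ a : Fin n, ∑ b : Fin n, (if c a = i ∧ c b = j then 1 else 0)
      = blockCard c i * blockCard c j := by
  have h1 : blockCard c i = ∑ a : Fin n, (if c a = i then 1 else 0) := by simp [blockCard]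
  have h2 : blockCard c j = ∑ b : Fin n, (if c b = j then 1 else 0) := by simp [blockCard]
  rw [h1, h2, Finset.sum_mul_sum]
  refine Finset.sum_congr rfl fun a _ => Finset.sum_congr rfl fun b _ => ?_
  split_ifs <;> simp_all

theorem stmt_13 (n k : ℕ) (S : Set (Fin n × Fin n))
    (L : Fin n × Fin n × Fin n → ℕ) (c : Fin n → Fin k) (hc : Function.Surjective c)
    (h01 : ∀ p, L p = 0 ∨ L p = 1)
    (hl1 : ∀ a b : Fin n, ∑ x : Fin n, L (x, a, b) ≤ 1)
    (hl2 : ∀ a b : Fin n, ∑ x : Fin n, L (a, x, b) ≤ 1)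
    (hl3 : ∀ a b : Fin n, ∑ x : Fin n, L (a, b, x) ≤ 1)
    (hS : ∀ p ∈ S, ∑ x : Fin n, L (p.1, p.2, x) = 1) :
    (∀ i j : Fin k,
      (∑ x : Fin k, tripleQuot L c x i j ≤ blockCard c i * blockCard c j) ∧
      (∑ x : Fin k, tripleQuot L c i x j ≤ blockCard c i * blockCard c j) ∧
      (∑ x : Fin k, tripleQuot L c i j x ≤ blockCard c i * blockCard c j)) ∧
    (∀ i j : Fin k, (∀ a b : Fin n, c a = i → c b = j → (a, b) ∈ S) →
      ∑ x : Fin k, tripleQuot L c i j x = blockCard c i * blockCard c j) := by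
  constructor
  · intro i j
    refine ⟨?_, ?_, ?_⟩
    · rw [quotSum1, ← countPairs c i j]
      refine Finset.sum_le_sum fun a _ => Finset.sum_le_sum fun b _ => ?_
      split_ifs
      · exact hl1 a b
      · exact le_refl 0
    · rw [quotSum2, ← countPairs c i j]
      refine Finset.sum_le_sum fun a _ => Finset.sum_le_sum fun b _ => ?_
      split_ifs
      · exact hl2 a b
      · exact le_refl 0
    · rw [quotSum3, ← countPairs c i j]
      refine Finset.sum_le_sum fun a _ => Finset.sum_le_sum fun b _ => ?_
      split_ifs
      · exact hl3 a b
      · exact le_refl 0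
  · intro i j hij
    rw [quotSum3, ← countPairs c i j]
    refine Finset.sum_congr rfl fun a _ => Finset.sum_congr rfl fun b _ => ?_
    split_ifs with h
    · exact hS (a, b) (hij a b h.1 h.2)
    · rfl
end

section
/- (Main theorem) Let M : Fin k × Fin k × Fin k → ℕ, S ⊆ Fin k × Fin k, and r₁,…,r_k positive integers such that M(l^t_{ij}) ≤ r_i·r_j for all t ∈ {1,2,3} and i,j, and M(l³_{ij}) = r_i·r_j for all (i,j) ∈ S. Then with n = ∑ r_i there exist a partition σ = {P₁,…,P_k} of Fin n with |P_i| = r_i and a partial S'-Latin square L : Fin n × Fin n × Fin n → ℕ, where S' = ⋃_{(i,j)∈S} P_i × P_j, such that M = ((L ∘₁ σ) ∘₂ σ) ∘₃ σ. -/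
section AuxLatinAmalgamation

lemma exists_sub_sum {β : Type*} [Fintype β] (d : β → ℕ) (m : ℕ) (h : m ≤ ∑ b, d b) :
    ∃ d' : β → ℕ, (∀ b, d' b ≤ d b) ∧ ∑ b, d' b = m := by
  classical
  induction m with
  | zero => exact ⟨0, fun b => Nat.zero_le _, by simp⟩
  | succ m ih =>
    obtain ⟨d', hle, hsum⟩ := ih (Nat.le_of_succ_le h)
    have : ∃ b, d' b < d b := by
      by_contra hc
      push_neg at hc
      have := Finset.sum_le_sum (f := d) (g := d') (s := Finset.univ) fun b _ => hc b
      omega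
    obtain ⟨b0, hb0⟩ := this
    refine ⟨Function.update d' b0 (d' b0 + 1), fun b => ?_, ?_⟩
    · rcases eq_or_ne b b0 with rfl | hb
      · simp; omega
      · simp [Function.update_of_ne hb]; exact hle b
    · rw [Finset.sum_update_of_mem (Finset.mem_univ b0), Finset.sdiff_singleton_eq_erase]
      rw [← Finset.add_sum_erase _ d' (Finset.mem_univ b0)] at hsum
      omega

lemma chunk {β : Type*} [Fintype β] (m : ℕ) :
    ∀ (c : ℕ) (d : β → ℕ), ∑ b, d b = m * c →
    ∃ h : β → Fin c → ℕ, (∀ b, ∑ s, h b s = d b) ∧ (∀ s, ∑ b, h b s = m) := by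
  classical
  intro c
  induction c with
  | zero =>
    intro d hd
    simp only [Nat.mul_zero] at hd
    rw [Finset.sum_eq_zero_iff] at hd
    exact ⟨fun _ _ => 0, fun b => by simp [hd b (Finset.mem_univ b)], fun s => s.elim0⟩
  | succ c ih =>
    intro d hd
    obtain ⟨d', hle, hsum⟩ := exists_sub_sum d m (by rw [hd]; nlinarith)
    obtain ⟨h, hh1, hh2⟩ := ih (fun b => d b - d' b) (by
      show ∑ b, (d b - d' b) = m * c
      rw [Finset.sum_tsub_distrib _ fun b _ => hle b, hd, hsum, Nat.mul_succ]
      omega)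
    refine ⟨fun b => Fin.cons (d' b) (h b), fun b => ?_, fun s => ?_⟩
    · have := hle b
      rw [Fin.sum_cons, hh1]; omega
    · induction s using Fin.cases with
      | zero => simpa using hsum
      | succ s => simpa using hh2 s

/-- A regular bipartite multigraph (given as a multiplicity function) has a perfect matching. -/
lemma regular_matching {A B : Type*} [Fintype A] [Fintype B] [DecidableEq A] [DecidableEq B]
    (F : A → B → ℕ) (m : ℕ) (hm : 0 < m)
    (hA : ∀ a, ∑ b, F a b = m) (hB : ∀ b, ∑ a, F a b = m) :
    ∃ σ : A → B, Function.Bijective σ ∧ ∀ a, 0 < F a (σ a) := by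
  classical
  set t : A → Finset B := fun a => Finset.univ.filter (fun b => 0 < F a b) with ht
  have hall : ∀ s : Finset A, s.card ≤ (s.biUnion t).card := by
    intro s
    have h1 : m * s.card = ∑ a ∈ s, ∑ b, F a b := by
      rw [Finset.sum_congr rfl fun a _ => hA a]; simp [mul_comm]
    have h2 : ∀ a ∈ s, ∑ b, F a b = ∑ b ∈ s.biUnion t, F a b := by
      intro a ha
      refine (Finset.sum_subset (Finset.subset_univ _) ?_).symm
      intro b _ hb
      have hb' : b ∉ t a := fun hc => hb (Finset.mem_biUnion.mpr ⟨a, ha, hc⟩)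
      simp only [ht, Finset.mem_filter, Finset.mem_univ, true_and, not_lt] at hb'
      omega
    have h3 : ∑ a ∈ s, ∑ b ∈ s.biUnion t, F a b ≤ m * (s.biUnion t).card := by
      rw [Finset.sum_comm]
      calc ∑ b ∈ s.biUnion t, ∑ a ∈ s, F a b
          ≤ ∑ b ∈ s.biUnion t, ∑ a, F a b :=
            Finset.sum_le_sum fun b _ => Finset.sum_le_sum_of_subset (Finset.subset_univ s)
        _ = m * (s.biUnion t).card := by
            rw [Finset.sum_congr rfl fun b _ => hB b]; simp [mul_comm]
    have := h1 ▸ (Finset.sum_congr rfl h2) ▸ h3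
    calc s.card ≤ m * s.card / m := by rw [Nat.mul_div_cancel_left _ hm]
      _ ≤ m * (s.biUnion t).card / m := Nat.div_le_div_right (by omega)
      _ = (s.biUnion t).card := Nat.mul_div_cancel_left _ hm
  obtain ⟨σ, hinj, hmem⟩ := (Finset.all_card_le_biUnion_card_iff_exists_injective t).mp hall
  have hcard : Fintype.card A = Fintype.card B := by
    have : m * Fintype.card A = m * Fintype.card B := by
      calc m * Fintype.card A = ∑ a : A, ∑ b, F a b := by
            rw [Finset.sum_congr rfl fun a _ => hA a]; simp [mul_comm, Finset.card_univ]
        _ = ∑ b : B, ∑ a, F a b := Finset.sum_comm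
        _ = m * Fintype.card B := by
            rw [Finset.sum_congr rfl fun b _ => hB b]; simp [mul_comm, Finset.card_univ]
    exact Nat.eq_of_mul_eq_mul_left hm this
  refine ⟨σ, (Fintype.bijective_iff_injective_and_card σ).mpr ⟨hinj, hcard⟩, fun a => ?_⟩
  have := hmem a
  simp only [ht, Finset.mem_filter] at this
  exact this.2

/-- König: a regular bipartite multigraph decomposes into perfect matchings. -/
lemma regular_decomp {A B : Type*} [Fintype A] [Fintype B] [DecidableEq A] [DecidableEq B]
    (m : ℕ) : ∀ (F : A → B → ℕ), (∀ a, ∑ b, F a b = m) → (∀ b, ∑ a, F a b = m) →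
    ∃ g : Fin m → A → B → ℕ, (∀ a b, ∑ c, g c a b = F a b) ∧
      (∀ c a, ∑ b, g c a b = 1) ∧ (∀ c b, ∑ a, g c a b = 1) := by
  classical
  induction m with
  | zero =>
    intro F hFA _
    refine ⟨fun c => c.elim0, fun a b => ?_, fun c => c.elim0, fun c => c.elim0⟩
    have h := hFA a
    rw [Finset.sum_eq_zero_iff] at h
    simp [h b (Finset.mem_univ b)]
  | succ m ih =>
    intro F hFA hFB
    obtain ⟨σ, hbij, hpos⟩ := regular_matching F (m + 1) (Nat.succ_pos m) hFA hFB
    set F' : A → B → ℕ := fun a b => F a b - (if σ a = b then 1 else 0) with hF'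
    have key : ∀ a b, F a b = F' a b + (if σ a = b then 1 else 0) := by
      intro a b
      simp only [hF']
      rcases eq_or_ne (σ a) b with h | h
      · subst h; have := hpos a; simp only [eq_self_iff_true, if_true]; omega
      · simp [h]
    have hA' : ∀ a, ∑ b, F' a b = m := by
      intro a
      have h1 : ∑ b, F a b = ∑ b, F' a b + ∑ b, (if σ a = b then 1 else 0) := by
        rw [← Finset.sum_add_distrib]; exact Finset.sum_congr rfl fun b _ => key a b
      have h2 : ∑ b, (if σ a = b then 1 else 0) = 1 := by simp
      have := hFA a; omega
    have hB' : ∀ b, ∑ a, F' a b = m := by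
      intro b
      have h1 : ∑ a, F a b = ∑ a, F' a b + ∑ a, (if σ a = b then 1 else 0) := by
        rw [← Finset.sum_add_distrib]; exact Finset.sum_congr rfl fun a _ => key a b
      have h2 : ∑ a, (if σ a = b then 1 else 0) = 1 := by
        obtain ⟨a0, ha0⟩ := hbij.surjective b
        rw [Finset.sum_eq_single a0]
        · simp [ha0]
        · intro a _ ha
          have : σ a ≠ b := fun hc => ha (hbij.injective (by rw [hc, ha0]))
          simp [this]
        · simp
      have := hFB b; omega
    obtain ⟨g, hg1, hg2, hg3⟩ := ih F' hA' hB'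
    refine ⟨Fin.cons (fun a b => if σ a = b then 1 else 0) g, fun a b => ?_, fun c => ?_, fun c => ?_⟩
    · rw [Fin.sum_univ_succ]
      simp only [Fin.cons_zero, Fin.cons_succ]
      rw [hg1]
      have := key a b; omega
    · induction c using Fin.cases with
      | zero => intro a; simp
      | succ c => intro a; simpa using hg2 c a
    · induction c using Fin.cases with
      | zero =>
        intro b
        simp only [Fin.cons_zero]
        obtain ⟨a0, ha0⟩ := hbij.surjective b
        rw [Finset.sum_eq_single a0]
        · simp [ha0]
        · intro a _ ha
          have : σ a ≠ b := fun hc => ha (hbij.injective (by rw [hc, ha0]))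
          simp [this]
        · simp
      | succ c => intro b; simpa using hg3 c b






lemma sum_sigma_univ {α : Type*} {σ : α → Type*} [Fintype α] [∀ a, Fintype (σ a)]
    (f : Sigma σ → ℕ) : ∑ x : Sigma σ, f x = ∑ a, ∑ s, f ⟨a, s⟩ := by
  rw [← Finset.univ_sigma_univ, Finset.sum_sigma]

/-- Exact splitting of a bipartite multigraph with degrees `m * cap` into `m` classes
with degrees `cap`. -/
lemma exact_split {A B : Type*} [Fintype A] [Fintype B] [DecidableEq A] [DecidableEq B]
    (m : ℕ) (f : A → B → ℕ) (capA : A → ℕ) (capB : B → ℕ)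
    (hA : ∀ a, ∑ b, f a b = m * capA a) (hB : ∀ b, ∑ a, f a b = m * capB b) :
    ∃ g : Fin m → A → B → ℕ, (∀ a b, ∑ c, g c a b = f a b) ∧
      (∀ c a, ∑ b, g c a b = capA a) ∧ (∀ c b, ∑ a, g c a b = capB b) := by
  classical
  -- split each A-vertex into capA a copies of degree m
  have h1 : ∀ a : A, ∃ h : B → Fin (capA a) → ℕ,
      (∀ b, ∑ s, h b s = f a b) ∧ (∀ s, ∑ b, h b s = m) :=
    fun a => chunk m (capA a) (f a) (hA a)
  choose h hh1 hh2 using h1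
  set A' := Σ a : A, Fin (capA a) with hA'def
  set G : A' → B → ℕ := fun p b => h p.1 b p.2 with hGdef
  have hGA : ∀ p : A', ∑ b, G p b = m := fun p => hh2 p.1 p.2
  have hGB : ∀ b, ∑ p : A', G p b = m * capB b := by
    intro b
    rw [sum_sigma_univ]
    calc ∑ a : A, ∑ s : Fin (capA a), h a b s = ∑ a : A, f a b :=
          Finset.sum_congr rfl fun a _ => hh1 a b
      _ = m * capB b := hB b
  -- split each B-vertex into capB b copies of degree m
  have h2 : ∀ b : B, ∃ h' : A' → Fin (capB b) → ℕ,
      (∀ p, ∑ t, h' p t = G p b) ∧ (∀ t, ∑ p, h' p t = m) :=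
    fun b => chunk m (capB b) (fun p => G p b) (hGB b)
  choose h' hh1' hh2' using h2
  set B' := Σ b : B, Fin (capB b) with hB'def
  set F : A' → B' → ℕ := fun p q => h' q.1 p q.2 with hFdef
  have hFA : ∀ p : A', ∑ q : B', F p q = m := by
    intro p
    rw [sum_sigma_univ]
    calc ∑ b : B, ∑ t : Fin (capB b), h' b p t = ∑ b : B, G p b :=
          Finset.sum_congr rfl fun b _ => hh1' b p
      _ = m := hGA p
  have hFB : ∀ q : B', ∑ p : A', F p q = m := fun q => hh2' q.1 q.2
  obtain ⟨cl, hcl1, hcl2, hcl3⟩ := regular_decomp m F hFA hFB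
  refine ⟨fun c a b => ∑ s : Fin (capA a), ∑ t : Fin (capB b), cl c ⟨a, s⟩ ⟨b, t⟩,
      fun a b => ?_, fun c a => ?_, fun c b => ?_⟩
  · rw [Finset.sum_comm]
    calc ∑ s : Fin (capA a), ∑ c : Fin m, ∑ t : Fin (capB b), cl c ⟨a, s⟩ ⟨b, t⟩
        = ∑ s : Fin (capA a), ∑ t : Fin (capB b), ∑ c : Fin m, cl c ⟨a, s⟩ ⟨b, t⟩ :=
          Finset.sum_congr rfl fun s _ => Finset.sum_comm
      _ = ∑ s : Fin (capA a), ∑ t : Fin (capB b), F ⟨a, s⟩ ⟨b, t⟩ := by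
          refine Finset.sum_congr rfl fun s _ => Finset.sum_congr rfl fun t _ => hcl1 _ _
      _ = ∑ s : Fin (capA a), G ⟨a, s⟩ b := by
          refine Finset.sum_congr rfl fun s _ => hh1' b ⟨a, s⟩
      _ = f a b := hh1 a b
  · rw [Finset.sum_comm]
    calc ∑ s : Fin (capA a), ∑ b : B, ∑ t : Fin (capB b), cl c ⟨a, s⟩ ⟨b, t⟩
        = ∑ s : Fin (capA a), ∑ q : B', cl c ⟨a, s⟩ q := by
          refine Finset.sum_congr rfl fun s _ => (sum_sigma_univ _).symm
      _ = ∑ s : Fin (capA a), 1 := Finset.sum_congr rfl fun s _ => hcl2 c ⟨a, s⟩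
      _ = capA a := by simp
  · calc ∑ a : A, ∑ s : Fin (capA a), ∑ t : Fin (capB b), cl c ⟨a, s⟩ ⟨b, t⟩
        = ∑ t : Fin (capB b), ∑ a : A, ∑ s : Fin (capA a), cl c ⟨a, s⟩ ⟨b, t⟩ := by
          rw [Finset.sum_comm]
          exact Finset.sum_congr rfl fun a _ => Finset.sum_comm
      _ = ∑ t : Fin (capB b), ∑ p : A', cl c p ⟨b, t⟩ := by
          refine Finset.sum_congr rfl fun t _ => (sum_sigma_univ (fun p : A' => cl c p ⟨b, t⟩)).symm
      _ = ∑ t : Fin (capB b), 1 := Finset.sum_congr rfl fun t _ => hcl3 c ⟨b, t⟩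
      _ = capB b := by simp

/-- Master splitting lemma: inequality version via padding. -/
lemma master_split {A B : Type*} [Fintype A] [Fintype B] [DecidableEq A] [DecidableEq B]
    (m : ℕ) (f : A → B → ℕ) (capA : A → ℕ) (capB : B → ℕ)
    (hA : ∀ a, ∑ b, f a b ≤ m * capA a) (hB : ∀ b, ∑ a, f a b ≤ m * capB b) :
    ∃ g : Fin m → A → B → ℕ, (∀ a b, ∑ c, g c a b = f a b) ∧
      (∀ c a, ∑ b, g c a b ≤ capA a) ∧ (∀ c b, ∑ a, g c a b ≤ capB b) := by
  classical
  set E := ∑ a : A, ∑ b : B, f a b with hE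
  set f' : A ⊕ Unit → B ⊕ Unit → ℕ := fun x y =>
    match x, y with
    | Sum.inl a, Sum.inl b => f a b
    | Sum.inl a, Sum.inr _ => m * capA a - ∑ b, f a b
    | Sum.inr _, Sum.inl b => m * capB b - ∑ a, f a b
    | Sum.inr _, Sum.inr _ => E with hf'
  set capA' : A ⊕ Unit → ℕ := Sum.elim capA (fun _ => ∑ b, capB b) with hcapA'
  set capB' : B ⊕ Unit → ℕ := Sum.elim capB (fun _ => ∑ a, capA a) with hcapB'
  have hA' : ∀ x, ∑ y, f' x y = m * capA' x := by
    intro x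
    rw [Fintype.sum_sum_type]
    cases x with
    | inl a =>
      simp only [hf', hcapA', Sum.elim_inl]
      have := hA a
      simp only [Finset.univ_unique, Finset.sum_singleton]
      omega
    | inr u =>
      simp only [hf', hcapA', Sum.elim_inr]
      have h1 : ∑ b : B, (m * capB b - ∑ a, f a b) = ∑ b : B, m * capB b - ∑ b : B, ∑ a, f a b :=
        Finset.sum_tsub_distrib _ fun b _ => hB b
      have h2 : ∑ b : B, ∑ a : A, f a b = E := by rw [hE, Finset.sum_comm]
      simp only [Finset.univ_unique, Finset.sum_singleton]
      rw [h1, h2]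
      have : E ≤ ∑ b : B, m * capB b := by
        rw [← h2]; exact Finset.sum_le_sum fun b _ => hB b
      rw [Finset.mul_sum]
      omega
  have hB' : ∀ y, ∑ x, f' x y = m * capB' y := by
    intro y
    rw [Fintype.sum_sum_type]
    cases y with
    | inl b =>
      simp only [hf', hcapB', Sum.elim_inl]
      have := hB b
      simp only [Finset.univ_unique, Finset.sum_singleton]
      omega
    | inr u =>
      simp only [hf', hcapB', Sum.elim_inr]
      have h1 : ∑ a : A, (m * capA a - ∑ b, f a b) = ∑ a : A, m * capA a - ∑ a : A, ∑ b, f a b :=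
        Finset.sum_tsub_distrib _ fun a _ => hA a
      simp only [Finset.univ_unique, Finset.sum_singleton]
      rw [h1, ← hE]
      have : E ≤ ∑ a : A, m * capA a := by
        rw [hE]; exact Finset.sum_le_sum fun a _ => hA a
      rw [Finset.mul_sum]
      omega
  obtain ⟨g', hg1, hg2, hg3⟩ := exact_split m f' capA' capB' hA' hB'
  refine ⟨fun c a b => g' c (Sum.inl a) (Sum.inl b), fun a b => hg1 (Sum.inl a) (Sum.inl b),
      fun c a => ?_, fun c b => ?_⟩
  · have := hg2 c (Sum.inl a)
    rw [Fintype.sum_sum_type] at this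
    simp only [hcapA', Sum.elim_inl] at this
    show ∑ b : B, g' c (Sum.inl a) (Sum.inl b) ≤ capA a
    omega
  · have := hg3 c (Sum.inl b)
    rw [Fintype.sum_sum_type] at this
    simp only [hcapB', Sum.elim_inl] at this
    show ∑ a : A, g' c (Sum.inl a) (Sum.inl b) ≤ capB b
    omega

end AuxLatinAmalgamation






lemma sum_le_all_eq {β : Type*} [Fintype β] (f : β → ℕ) (c : ℕ) (hle : ∀ b, f b ≤ c)
    (hsum : ∑ b, f b = Fintype.card β * c) : ∀ b, f b = c := by
  intro b
  by_contra hb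
  have hlt : f b < c := lt_of_le_of_ne (hle b) hb
  have : ∑ x, f x < ∑ _x : β, c :=
    Finset.sum_lt_sum (fun x _ => hle x) ⟨b, Finset.mem_univ b, hlt⟩
  rw [Finset.sum_const, smul_eq_mul, Finset.card_univ] at this
  omega

lemma sigma_if_sum {k : ℕ} {r : Fin k → ℕ} (i : Fin k) (f : (Σ l, Fin (r l)) → ℕ) :
    ∑ ρ : Σ l, Fin (r l), (if ρ.1 = i then f ρ else 0) = ∑ a : Fin (r i), f ⟨i, a⟩ := by
  rw [sum_sigma_univ]
  rw [Finset.sum_eq_single i]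
  · simp
  · intro l _ hl; simp [hl]
  · simp

theorem stmt_14 (k : ℕ) (M : Fin k × Fin k × Fin k → ℕ)
    (S : Set (Fin k × Fin k)) (r : Fin k → ℕ) (hr : ∀ i, 0 < r i)
    (hl1 : ∀ i j : Fin k, ∑ x : Fin k, M (x, i, j) ≤ r i * r j)
    (hl2 : ∀ i j : Fin k, ∑ x : Fin k, M (i, x, j) ≤ r i * r j)
    (hl3 : ∀ i j : Fin k, ∑ x : Fin k, M (i, j, x) ≤ r i * r j)
    (hS : ∀ p ∈ S, ∑ x : Fin k, M (p.1, p.2, x) = r p.1 * r p.2) :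
    ∃ (c : Fin (∑ i, r i) → Fin k)
      (L : Fin (∑ i, r i) × Fin (∑ i, r i) × Fin (∑ i, r i) → ℕ),
      (∀ i, blockCard c i = r i) ∧
      (∀ p, L p = 0 ∨ L p = 1) ∧
      (∀ a b, ∑ x, L (x, a, b) ≤ 1) ∧
      (∀ a b, ∑ x, L (a, x, b) ≤ 1) ∧
      (∀ a b, ∑ x, L (a, b, x) ≤ 1) ∧
      (∀ a b, (c a, c b) ∈ S → ∑ x, L (a, b, x) = 1) ∧
      (∀ i j l : Fin k, M (i, j, l) = tripleQuot L c i j l) := by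
  classical
  set n := ∑ i, r i with hn
  -- the row/column/symbol index type
  let Row : Type := Σ i : Fin k, Fin (r i)
  have hcardRow : Fintype.card Row = n := by
    simp [Row, Fintype.card_sigma, hn]
  let e : Row ≃ Fin n := Fintype.equivFinOfCardEq hcardRow
  -- Step 1 : split symbols
  have step1 : ∀ l : Fin k, ∃ N : Fin (r l) → Fin k → Fin k → ℕ,
      (∀ i j, ∑ s, N s i j = M (i, j, l)) ∧ (∀ s i, ∑ j, N s i j ≤ r i) ∧
      (∀ s j, ∑ i, N s i j ≤ r j) := by
    intro l
    exact master_split (r l) (fun i j => M (i, j, l)) r r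
      (fun i => by rw [mul_comm]; exact hl2 i l)
      (fun j => by rw [mul_comm]; exact hl1 j l)
  choose N hN1 hN2 hN3 using step1
  have hTsum : ∀ i j, ∑ σ : Row, N σ.1 σ.2 i j = ∑ l, M (i, j, l) := by
    intro i j
    rw [sum_sigma_univ]
    exact Finset.sum_congr rfl fun l _ => hN1 l i j
  -- Step 2 : split rows
  have step2 : ∀ i : Fin k, ∃ U : Fin (r i) → Row → Fin k → ℕ,
      (∀ σ j, ∑ a, U a σ j = N σ.1 σ.2 i j) ∧ (∀ a σ, ∑ j, U a σ j ≤ 1) ∧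
      (∀ a j, ∑ σ, U a σ j ≤ r j) := by
    intro i
    exact master_split (r i) (fun (σ : Row) (j : Fin k) => N σ.1 σ.2 i j)
      (fun _ => 1) r
      (fun σ => by rw [mul_one]; exact hN2 σ.1 σ.2 i)
      (fun j => by rw [hTsum i j]; exact hl3 i j)
  choose U hU0 hU1 hU2 using step2
  -- Step 3 : split columns
  have step3 : ∀ j : Fin k, ∃ V : Fin (r j) → Row → Row → ℕ,
      (∀ ρ σ, ∑ b, V b ρ σ = U ρ.1 ρ.2 σ j) ∧ (∀ b ρ, ∑ σ, V b ρ σ ≤ 1) ∧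
      (∀ b σ, ∑ ρ, V b ρ σ ≤ 1) := by
    intro j
    refine master_split (r j) (fun (ρ : Row) (σ : Row) => U ρ.1 ρ.2 σ j)
      (fun _ => 1) (fun _ => 1)
      (fun ρ => by rw [mul_one]; exact hU2 ρ.1 ρ.2 j)
      (fun σ => by
        rw [mul_one, sum_sigma_univ]
        calc ∑ i, ∑ a : Fin (r i), U i a σ j = ∑ i, N σ.1 σ.2 i j :=
              Finset.sum_congr rfl fun i _ => hU0 i σ j
          _ ≤ r j := hN3 σ.1 σ.2 j)
  choose V hV0 hV1 hV2 using step3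
  -- the partition and the Latin square
  refine ⟨fun x => (e.symm x).1,
    fun p => V (e.symm p.2.1).1 (e.symm p.2.1).2 (e.symm p.1) (e.symm p.2.2),
    ?_, ?_, ?_, ?_, ?_, ?_, ?_⟩
  · -- block cardinalities
    intro i
    rw [blockCard, Finset.card_filter]
    calc ∑ x : Fin n, (if (e.symm x).1 = i then 1 else 0)
        = ∑ ρ : Row, (if ρ.1 = i then 1 else 0) :=
          Equiv.sum_comp e.symm (fun ρ : Row => if ρ.1 = i then 1 else 0)
      _ = ∑ _a : Fin (r i), 1 := sigma_if_sum i (fun _ => 1)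
      _ = r i := by simp
  · -- 0/1 entries
    intro p
    have h1 : V (e.symm p.2.1).1 (e.symm p.2.1).2 (e.symm p.1) (e.symm p.2.2) ≤
        ∑ σ : Row, V (e.symm p.2.1).1 (e.symm p.2.1).2 (e.symm p.1) σ :=
      Finset.single_le_sum (fun σ _ => Nat.zero_le _) (Finset.mem_univ _)
    have h2 := hV1 (e.symm p.2.1).1 (e.symm p.2.1).2 (e.symm p.1)
    beta_reduce
    omega
  · -- line sums, first coordinate
    intro a b
    calc ∑ x : Fin n, V (e.symm a).1 (e.symm a).2 (e.symm x) (e.symm b)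
        = ∑ ρ : Row, V (e.symm a).1 (e.symm a).2 ρ (e.symm b) :=
          Equiv.sum_comp e.symm (fun ρ : Row => V (e.symm a).1 (e.symm a).2 ρ (e.symm b))
      _ ≤ 1 := hV2 (e.symm a).1 (e.symm a).2 (e.symm b)
  · -- line sums, second coordinate
    intro a b
    calc ∑ x : Fin n, V (e.symm x).1 (e.symm x).2 (e.symm a) (e.symm b)
        = ∑ κ : Row, V κ.1 κ.2 (e.symm a) (e.symm b) :=
          Equiv.sum_comp e.symm (fun κ : Row => V κ.1 κ.2 (e.symm a) (e.symm b))
      _ = ∑ j, ∑ bb : Fin (r j), V j bb (e.symm a) (e.symm b) :=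
          sum_sigma_univ (fun κ : Row => V κ.1 κ.2 (e.symm a) (e.symm b))
      _ = ∑ j, U (e.symm a).1 (e.symm a).2 (e.symm b) j :=
          Finset.sum_congr rfl fun j _ => hV0 j (e.symm a) (e.symm b)
      _ ≤ 1 := hU1 (e.symm a).1 (e.symm a).2 (e.symm b)
  · -- line sums, third coordinate
    intro a b
    calc ∑ x : Fin n, V (e.symm b).1 (e.symm b).2 (e.symm a) (e.symm x)
        = ∑ σ : Row, V (e.symm b).1 (e.symm b).2 (e.symm a) σ :=
          Equiv.sum_comp e.symm (fun σ : Row => V (e.symm b).1 (e.symm b).2 (e.symm a) σ)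
      _ ≤ 1 := hV1 (e.symm b).1 (e.symm b).2 (e.symm a)
  · -- S-exactness
    intro a b hab
    have hUS : ∀ aa : Fin (r ((e.symm a).1)),
        ∑ σ : Row, U (e.symm a).1 aa σ (e.symm b).1 = r (e.symm b).1 := by
      have hsum : ∑ aa : Fin (r (e.symm a).1), ∑ σ : Row, U (e.symm a).1 aa σ (e.symm b).1
          = r (e.symm a).1 * r (e.symm b).1 := by
        rw [Finset.sum_comm]
        calc ∑ σ : Row, ∑ aa : Fin (r (e.symm a).1), U (e.symm a).1 aa σ (e.symm b).1
            = ∑ σ : Row, N σ.1 σ.2 (e.symm a).1 (e.symm b).1 :=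
              Finset.sum_congr rfl fun σ _ => hU0 (e.symm a).1 σ (e.symm b).1
          _ = ∑ l, M ((e.symm a).1, (e.symm b).1, l) := hTsum _ _
          _ = r (e.symm a).1 * r (e.symm b).1 := hS _ hab
      exact sum_le_all_eq _ _ (fun aa => hU2 (e.symm a).1 aa (e.symm b).1)
        (by rw [hsum, Fintype.card_fin])
    have hVS : ∀ bb : Fin (r ((e.symm b).1)),
        ∑ σ : Row, V (e.symm b).1 bb (e.symm a) σ = 1 := by
      have hsum : ∑ bb : Fin (r (e.symm b).1), ∑ σ : Row, V (e.symm b).1 bb (e.symm a) σ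
          = r (e.symm b).1 := by
        rw [Finset.sum_comm]
        calc ∑ σ : Row, ∑ bb : Fin (r (e.symm b).1), V (e.symm b).1 bb (e.symm a) σ
            = ∑ σ : Row, U (e.symm a).1 (e.symm a).2 σ (e.symm b).1 :=
              Finset.sum_congr rfl fun σ _ => hV0 (e.symm b).1 (e.symm a) σ
          _ = r (e.symm b).1 := hUS (e.symm a).2
      exact sum_le_all_eq _ _ (fun bb => hV1 (e.symm b).1 bb (e.symm a))
        (by rw [hsum, Fintype.card_fin, mul_one])
    calc ∑ x : Fin n, V (e.symm b).1 (e.symm b).2 (e.symm a) (e.symm x)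
        = ∑ σ : Row, V (e.symm b).1 (e.symm b).2 (e.symm a) σ :=
          Equiv.sum_comp e.symm (fun σ : Row => V (e.symm b).1 (e.symm b).2 (e.symm a) σ)
      _ = 1 := hVS (e.symm b).2
  · -- quotient
    intro i j l
    refine Eq.symm ?_
    calc tripleQuot
          (fun p => V (e.symm p.2.1).1 (e.symm p.2.1).2 (e.symm p.1) (e.symm p.2.2))
          (fun x => (e.symm x).1) i j l
        = ∑ x : Fin n, ∑ y : Fin n, ∑ z : Fin n,
            (if (e.symm x).1 = i ∧ (e.symm y).1 = j ∧ (e.symm z).1 = l then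
              V (e.symm y).1 (e.symm y).2 (e.symm x) (e.symm z) else 0) := by
          rw [tripleQuot, Fintype.sum_prod_type]
          exact Finset.sum_congr rfl fun x _ => Fintype.sum_prod_type _
      _ = ∑ ρ : Row, ∑ κ : Row, ∑ σ : Row,
            (if ρ.1 = i ∧ κ.1 = j ∧ σ.1 = l then V κ.1 κ.2 ρ σ else 0) := by
          refine Fintype.sum_equiv e.symm _ _ fun x => ?_
          refine Fintype.sum_equiv e.symm _ _ fun y => ?_
          exact Fintype.sum_equiv e.symm _ _ fun z => rfl
      _ = ∑ ρ : Row, (if ρ.1 = i then (∑ κ : Row, ∑ σ : Row,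
            (if κ.1 = j ∧ σ.1 = l then V κ.1 κ.2 ρ σ else 0)) else 0) := by
          refine Finset.sum_congr rfl fun ρ _ => ?_
          split_ifs with h
          · exact Finset.sum_congr rfl fun κ _ => Finset.sum_congr rfl fun σ _ => by simp [h]
          · refine Finset.sum_eq_zero fun κ _ => Finset.sum_eq_zero fun σ _ => by simp [h]
      _ = ∑ aa : Fin (r i), ∑ κ : Row, ∑ σ : Row,
            (if κ.1 = j ∧ σ.1 = l then V κ.1 κ.2 ⟨i, aa⟩ σ else 0) :=
          sigma_if_sum i _
      _ = ∑ aa : Fin (r i), ∑ bb : Fin (r j), ∑ σ : Row,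
            (if σ.1 = l then V j bb ⟨i, aa⟩ σ else 0) := by
          refine Finset.sum_congr rfl fun aa _ => ?_
          calc ∑ κ : Row, ∑ σ : Row, (if κ.1 = j ∧ σ.1 = l then V κ.1 κ.2 ⟨i, aa⟩ σ else 0)
              = ∑ κ : Row, (if κ.1 = j then (∑ σ : Row,
                  (if σ.1 = l then V κ.1 κ.2 ⟨i, aa⟩ σ else 0)) else 0) := by
                refine Finset.sum_congr rfl fun κ _ => ?_
                split_ifs with h
                · exact Finset.sum_congr rfl fun σ _ => by simp [h]
                · exact Finset.sum_eq_zero fun σ _ => by simp [h]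
            _ = ∑ bb : Fin (r j), ∑ σ : Row, (if σ.1 = l then V j bb ⟨i, aa⟩ σ else 0) :=
                sigma_if_sum j _
      _ = ∑ aa : Fin (r i), ∑ bb : Fin (r j), ∑ s : Fin (r l), V j bb ⟨i, aa⟩ ⟨l, s⟩ := by
          refine Finset.sum_congr rfl fun aa _ => Finset.sum_congr rfl fun bb _ => ?_
          exact sigma_if_sum l (fun σ => V j bb ⟨i, aa⟩ σ)
      _ = ∑ aa : Fin (r i), ∑ s : Fin (r l), ∑ bb : Fin (r j), V j bb ⟨i, aa⟩ ⟨l, s⟩ :=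
          Finset.sum_congr rfl fun aa _ => Finset.sum_comm
      _ = ∑ aa : Fin (r i), ∑ s : Fin (r l), U i aa ⟨l, s⟩ j := by
          refine Finset.sum_congr rfl fun aa _ => Finset.sum_congr rfl fun s _ => ?_
          exact hV0 j ⟨i, aa⟩ ⟨l, s⟩
      _ = ∑ s : Fin (r l), ∑ aa : Fin (r i), U i aa ⟨l, s⟩ j := Finset.sum_comm
      _ = ∑ s : Fin (r l), N l s i j :=
          Finset.sum_congr rfl fun s _ => hU0 i ⟨l, s⟩ j
      _ = M (i, j, l) := hN1 l i j
end

section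
/- Let M : Fin k × Fin k × Fin k → ℝ≥0 and β > 0, with S ⊆ Fin k × Fin k, such that all line sums of M are at most β and the vertical line sums equal β exactly for (i,j) ∈ S. Then there exists a matrix M' : Fin k × Fin k × Fin k → ℕ with supp(M') = supp(M) and a positive integer r such that all line sums of M' are at most r² and vertical line sums of M' equal r² for (i,j) ∈ S. -/
/-!
Fix a Hamel basis of ℝ over ℚ and send each basis vector to a rational approximation of
itself: these ℚ-linear maps `ℝ → ℚ` converge pointwise to the identity. Far enough along,
such a map keeps every strict inequality among the finitely many partial sums of the entries
of `M` and of `β`, and by linearity every equality, so the line sums of the rational matrix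
it produces obey the same pattern with respect to its image of `β`. Clearing denominators
gives a natural matrix `N` with line sums at most `r` (exactly `r` on `S`), and `r • N` has
line sums at most `r ^ 2`.
-/

open Filter Topology
open scoped NNReal

theorem exists_seq_rat_tendsto (x : ℝ) :
    ∃ u : ℕ → ℚ, Tendsto (fun n => (u n : ℝ)) atTop (𝓝 x) := by
  have := Rat.isDenseEmbedding_coe_real.isDenseInducing.comap_nhds_neBot x
  obtain ⟨u, hu⟩ := exists_seq_tendsto ((𝓝 x).comap ((↑) : ℚ → ℝ))
  exact ⟨u, tendsto_comap_iff.1 hu⟩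

theorem exists_seq_linearMap_rat_tendsto :
    ∃ φ : ℕ → ℝ →ₗ[ℚ] ℚ, ∀ x : ℝ, Tendsto (fun n => (φ n x : ℝ)) atTop (𝓝 x) := by
  let b := Module.Free.chooseBasis ℚ ℝ
  choose u hu using fun i => exists_seq_rat_tendsto (b i)
  refine ⟨fun n => b.constr ℚ (u · n), fun x => ?_⟩
  have hx : ∑ i ∈ (b.repr x).support, (b.repr x i : ℝ) * b i = x := by
    conv_rhs => rw [← b.linearCombination_repr x]
    simp [Finsupp.linearCombination_apply, Finsupp.sum, Rat.smul_def]
  have := tendsto_finsetSum (b.repr x).support fun i _ => (hu i).const_mul (b.repr x i : ℝ)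
  rw [hx] at this
  simpa [b.constr_apply, Finsupp.sum] using this

theorem Rat.exists_natCast_eq_mul_of_den_dvd {x : ℚ} (hx : 0 ≤ x) {D : ℕ} (h : x.den ∣ D) :
    ∃ m : ℕ, (m : ℚ) = x * D := by
  obtain ⟨c, rfl⟩ := h
  refine ⟨x.num.toNat * c, ?_⟩
  rw [Nat.cast_mul, Nat.cast_mul, ← mul_assoc, Rat.mul_den_eq_num]
  exact_mod_cast congrArg (· * (c : ℤ)) (Int.toNat_of_nonneg (Rat.num_nonneg.2 hx))

theorem Rat.exists_pos_forall_natCast_eq_mul {ι : Type*} [Fintype ι] (a : ι → ℚ)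
    (ha : ∀ i, 0 ≤ a i) : ∃ D : ℕ, 0 < D ∧ ∀ i, ∃ m : ℕ, (m : ℚ) = a i * D :=
  ⟨∏ i, (a i).den, Finset.prod_pos fun i _ => (a i).den_pos, fun i =>
    Rat.exists_natCast_eq_mul_of_den_dvd (ha i) (Finset.dvd_prod_of_mem _ (Finset.mem_univ i))⟩

section SumPattern

variable {ι κ : Type*} [Fintype ι] [Fintype κ]

theorem exists_rat_of_nnreal_sum_le (M : ι → ℝ≥0) (β : ℝ≥0) (hβ : 0 < β) :
    ∃ (a : ι → ℚ) (B : ℚ), 0 < B ∧ (∀ i, 0 ≤ a i) ∧ (∀ i, a i ≠ 0 ↔ M i ≠ 0) ∧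
      ∀ t : κ → ι, (∑ x, M (t x) ≤ β → ∑ x, a (t x) ≤ B) ∧
        (∑ x, M (t x) = β → ∑ x, a (t x) = B) := by
  obtain ⟨φ, hφ⟩ := exists_seq_linearMap_rat_tendsto
  have hpos : ∀ x : ℝ, 0 < x → ∀ᶠ n in atTop, 0 < φ n x := fun x hx =>
    ((hφ x).eventually_const_lt hx).mono fun n hn => by exact_mod_cast hn
  have hlt : ∀ x y : ℝ, x < y → ∀ᶠ n in atTop, φ n x < φ n y := fun x y hxy =>
    ((hφ x).eventually_lt (hφ y) hxy).mono fun n hn => by exact_mod_cast hn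
  have hev : ∀ᶠ n in atTop, 0 < φ n β ∧ (∀ i, M i ≠ 0 → 0 < φ n (M i)) ∧
      ∀ t : κ → ι, ∑ x, M (t x) < β → φ n (∑ x, M (t x) : ℝ≥0) < φ n β := by
    refine (hpos _ hβ).and ((eventually_all.2 fun i => ?_).and (eventually_all.2 fun t => ?_))
    · exact eventually_imp_distrib_left.2 fun hi =>
        hpos _ (NNReal.coe_pos.2 (pos_iff_ne_zero.2 hi))
    · exact eventually_imp_distrib_left.2 fun ht => hlt _ _ ht
  obtain ⟨n, hβn, hMn, hsumn⟩ := hev.exists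
  have hzero : ∀ i, M i = 0 → φ n (M i) = 0 := fun i hi => by simp [hi]
  have hsum : ∀ t : κ → ι, ∑ x, φ n (M (t x)) = φ n (∑ x, M (t x) : ℝ≥0) := fun t => by
    rw [NNReal.coe_sum, map_sum]
  refine ⟨fun i => φ n (M i), φ n β, hβn, fun i => ?_, fun i => ?_, fun t => ⟨fun ht => ?_,
    fun ht => by rw [hsum, ht]⟩⟩
  · by_cases hi : M i = 0
    · exact (hzero i hi).ge
    · exact (hMn i hi).le
  · exact ⟨mt (hzero i), fun hi => (hMn i hi).ne'⟩
  · rw [hsum]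
    rcases ht.lt_or_eq with ht | ht
    · exact (hsumn t ht).le
    · rw [ht]

theorem exists_nat_of_nnreal_sum_le (M : ι → ℝ≥0) (β : ℝ≥0) (hβ : 0 < β) :
    ∃ (N : ι → ℕ) (r : ℕ), 0 < r ∧ (∀ i, N i ≠ 0 ↔ M i ≠ 0) ∧
      ∀ t : κ → ι, (∑ x, M (t x) ≤ β → ∑ x, N (t x) ≤ r) ∧
        (∑ x, M (t x) = β → ∑ x, N (t x) = r) := by
  obtain ⟨a, B, hB, ha, hsupp, hsum⟩ := exists_rat_of_nnreal_sum_le (κ := κ) M β hβ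
  obtain ⟨D, hD, hm⟩ := Rat.exists_pos_forall_natCast_eq_mul (fun o : Option ι => o.elim B a)
    fun o => o.rec hB.le ha
  choose m hm using hm
  have hcast : ∀ t : κ → ι, ((∑ x, m (some (t x)) : ℕ) : ℚ) = (∑ x, a (t x)) * D := fun t => by
    push_cast [hm, Finset.sum_mul]
    rfl
  refine ⟨fun i => m (some i), m none, ?_, fun i => ?_, fun t => ⟨fun ht => ?_, fun ht => ?_⟩⟩
  · exact_mod_cast (hm none).symm ▸ mul_pos hB (Nat.cast_pos.2 hD)
  · rw [← hsupp, ne_eq, ← Nat.cast_eq_zero (R := ℚ), hm]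
    simp [hD.ne']
  · have : ((∑ x, m (some (t x)) : ℕ) : ℚ) ≤ m none := by
      rw [hcast, hm]
      exact mul_le_mul_of_nonneg_right ((hsum t).1 ht) D.cast_nonneg
    exact_mod_cast this
  · have : ((∑ x, m (some (t x)) : ℕ) : ℚ) = m none := by
      rw [hcast, hm, (hsum t).2 ht]
      rfl
    exact_mod_cast this

end SumPattern

theorem stmt_16 (k : ℕ) (M : Fin k × Fin k × Fin k → ℝ≥0) (β : ℝ≥0) (hβ : 0 < β)
    (S : Set (Fin k × Fin k))
    (hl1 : ∀ i j : Fin k, ∑ x : Fin k, M (x, i, j) ≤ β)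
    (hl2 : ∀ i j : Fin k, ∑ x : Fin k, M (i, x, j) ≤ β)
    (hl3 : ∀ i j : Fin k, ∑ x : Fin k, M (i, j, x) ≤ β)
    (hS : ∀ p ∈ S, ∑ x : Fin k, M (p.1, p.2, x) = β) :
    ∃ (M' : Fin k × Fin k × Fin k → ℕ) (r : ℕ),
      0 < r ∧
      (∀ p, M' p ≠ 0 ↔ M p ≠ 0) ∧
      (∀ i j : Fin k, ∑ x : Fin k, M' (x, i, j) ≤ r ^ 2) ∧
      (∀ i j : Fin k, ∑ x : Fin k, M' (i, x, j) ≤ r ^ 2) ∧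
      (∀ i j : Fin k, ∑ x : Fin k, M' (i, j, x) ≤ r ^ 2) ∧
      (∀ p ∈ S, ∑ x : Fin k, M' (p.1, p.2, x) = r ^ 2) := by
  obtain ⟨N, r, hr, hsupp, hsum⟩ := exists_nat_of_nnreal_sum_le (κ := Fin k) M β hβ
  have hline : ∀ t : Fin k → Fin k × Fin k × Fin k, ∑ x, M (t x) ≤ β →
      ∑ x, N (t x) * r ≤ r ^ 2 := fun t ht => by
    rw [← Finset.sum_mul, sq]
    exact Nat.mul_le_mul_right r ((hsum t).1 ht)
  refine ⟨fun p => N p * r, r, hr, fun p => by simp [hr.ne', hsupp],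
    fun i j => hline _ (hl1 i j), fun i j => hline _ (hl2 i j), fun i j => hline _ (hl3 i j),
    fun p hp => ?_⟩
  rw [← Finset.sum_mul, (hsum _).2 (hS p hp), sq]
end

section
/- Let M : Fin m × Fin n → ℕ, I ⊆ Fin n, R ∈ ℕ^m, S ∈ ℕ^n with ∑R = ∑S, and suppose M has row sums ≤ R, column sums ≤ S, and column sums equal to S_j for j ∈ I. Then there exists M' : Fin m × Fin n → ℕ such that M + M' has row sum vector exactly R and column sum vector exactly S. -/
lemma exists_matrix_aux (m n : ℕ) : ∀ (N : ℕ) (r : Fin m → ℕ) (c : Fin n → ℕ),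
    ∑ i, r i = N → ∑ j, c j = N →
    ∃ A : Fin m × Fin n → ℕ,
      (∀ i, ∑ j : Fin n, A (i, j) = r i) ∧ (∀ j, ∑ i : Fin m, A (i, j) = c j) := by
  intro N
  induction N with
  | zero =>
    intro r c hr hc
    refine ⟨fun _ => 0, ?_, ?_⟩
    · intro i
      simp only [Finset.sum_const_zero]
      exact (Finset.sum_eq_zero_iff.mp hr i (Finset.mem_univ i)).symm
    · intro j
      simp only [Finset.sum_const_zero]
      exact (Finset.sum_eq_zero_iff.mp hc j (Finset.mem_univ j)).symm
  | succ N ih =>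
    intro r c hr hc
    have hi : ∃ i, 0 < r i := by
      by_contra h
      push_neg at h
      have : ∑ i, r i = 0 := Finset.sum_eq_zero fun i _ => Nat.le_zero.mp (h i)
      omega
    have hj : ∃ j, 0 < c j := by
      by_contra h
      push_neg at h
      have : ∑ j, c j = 0 := Finset.sum_eq_zero fun j _ => Nat.le_zero.mp (h j)
      omega
    obtain ⟨i, hi⟩ := hi
    obtain ⟨j, hj⟩ := hj
    have hr' : ∑ i', Function.update r i (r i - 1) i' = N := by
      rw [Finset.sum_update_of_mem (Finset.mem_univ i)]
      rw [Finset.sum_eq_sum_sdiff_singleton_add (Finset.mem_univ i) r] at hr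
      omega
    have hc' : ∑ j', Function.update c j (c j - 1) j' = N := by
      rw [Finset.sum_update_of_mem (Finset.mem_univ j)]
      rw [Finset.sum_eq_sum_sdiff_singleton_add (Finset.mem_univ j) c] at hc
      omega
    obtain ⟨A, hA1, hA2⟩ := ih _ _ hr' hc'
    refine ⟨fun p => A p + if p.1 = i ∧ p.2 = j then 1 else 0, ?_, ?_⟩
    · intro i0
      rw [Finset.sum_add_distrib, hA1]
      have : (∑ j0 : Fin n, if (i0, j0).1 = i ∧ (i0, j0).2 = j then 1 else 0)
          = if i0 = i then 1 else 0 := by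
        simp only
        by_cases h : i0 = i <;> simp [h, Finset.sum_ite_eq']
      rw [this]
      by_cases h : i0 = i <;> simp [h, Function.update] <;> omega
    · intro j0
      rw [Finset.sum_add_distrib, hA2]
      have : (∑ i0 : Fin m, if (i0, j0).1 = i ∧ (i0, j0).2 = j then 1 else 0)
          = if j0 = j then 1 else 0 := by
        simp only
        by_cases h : j0 = j <;> simp [h, Finset.sum_ite_eq']
      rw [this]
      by_cases h : j0 = j <;> simp [h, Function.update] <;> omega

theorem stmt_19 (m n : ℕ) (M : Fin m × Fin n → ℕ) (I : Set (Fin n))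
    (R : Fin m → ℕ) (S : Fin n → ℕ) (hRS : ∑ i, R i = ∑ j, S j)
    (hrow : ∀ i, ∑ j : Fin n, M (i, j) ≤ R i)
    (hcol : ∀ j, ∑ i : Fin m, M (i, j) ≤ S j)
    (hI : ∀ j ∈ I, ∑ i : Fin m, M (i, j) = S j) :
    ∃ M' : Fin m × Fin n → ℕ,
      (∀ i, ∑ j : Fin n, (M (i, j) + M' (i, j)) = R i) ∧
      (∀ j, ∑ i : Fin m, (M (i, j) + M' (i, j)) = S j) := by
  set r : Fin m → ℕ := fun i => R i - ∑ j : Fin n, M (i, j) with hrdef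
  set c : Fin n → ℕ := fun j => S j - ∑ i : Fin m, M (i, j) with hcdef
  have htot : ∑ i : Fin m, ∑ j : Fin n, M (i, j) = ∑ j : Fin n, ∑ i : Fin m, M (i, j) :=
    Finset.sum_comm
  have hsum : ∑ i, r i = ∑ j, c j := by
    have h1 : ∑ i, r i = ∑ i, R i - ∑ i : Fin m, ∑ j : Fin n, M (i, j) :=
      Finset.sum_tsub_distrib Finset.univ fun i _ => hrow i
    have h2 : ∑ j, c j = ∑ j, S j - ∑ j : Fin n, ∑ i : Fin m, M (i, j) :=
      Finset.sum_tsub_distrib Finset.univ fun j _ => hcol j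
    rw [h1, h2, htot, hRS]
  obtain ⟨A, hA1, hA2⟩ := exists_matrix_aux m n (∑ i, r i) r c rfl hsum.symm
  refine ⟨A, ?_, ?_⟩
  · intro i
    rw [Finset.sum_add_distrib, hA1]
    have := hrow i
    simp only [hrdef]
    omega
  · intro j
    rw [Finset.sum_add_distrib, hA2]
    have := hcol j
    simp only [hcdef]
    omega
end
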